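/- arXiv:2602.01903 — 10 statements merged into one kernel-verified Lean document; each statement's English description precedes it below -/
import Mathlib

section
/- Let ι be a finite index type and T ≥ 1 an integer. Let K be a convex subset of ℝ^ι. For t = 1,…,T let c_t ∈ ℝ^ι be loss vectors; for t = 1,…,T+1 let m_t ∈ ℝ^ι be prediction vectors, let ψ_t : ℝ^ι → ℝ be differentiable functions, and let p_t ∈ K be a minimizer over K of the map p ↦ ⟨p, Σ_{τ=1}^{t−1} c_τ + m_t⟩ + ψ_t(p). Then for every u ∈ K: Σ_{t=1}^{T} ⟨p_t − u, c_t⟩ ≤ ψ_1(u) − ψ_1(p_1) + Σ_{t=1}^{T} (ψ_{t+1}(u) − ψ_t(u) + ψ_t(p_{t+1}) − ψ_{t+1}(p_{t+1})) + Σ_{t=1}^{T} (⟨p_t − p_{t+1}, c_t − m_t⟩ − D_{ψ_t}(p_{t+1}, p_t)) + ⟨u − p_{T+1}, m_{T+1}⟩. -/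
/-!
Let `L t = ∑_{τ < t} c τ` and `Φ t = ψ t u - ψ t (p t) + ⟨u - p t, L t⟩`. First-order optimality
of `p t` over the convex set `K` gives `⟨p t - p (t+1), L t + m t⟩ ≤ ∇ψ t (p t) (p (t+1) - p t)`,
and since `L (t+1) = L t + c t` this bounds `⟨p t - u, c t⟩ + Φ (t+1) - Φ t` by the penalty and
stability terms of round `t`. Summing telescopes the potential: `Φ 1 = ψ 1 u - ψ 1 (p 1)`, and
optimality of `p (T+1)` against `u` gives `-Φ (T+1) ≤ ⟨u - p (T+1), m (T+1)⟩`. Nothing uses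
coordinates: the losses may be taken in the dual of any real normed space.
-/

open Finset

section FirstOrderOptimality

variable {E : Type*} [NormedAddCommGroup E] [NormedSpace ℝ E]

theorem IsMinOn.apply_sub_le_fderiv {K : Set E} {ℓ : StrongDual ℝ E} {ψ : E → ℝ} {x y : E}
    (hmin : IsMinOn (fun q ↦ ℓ q + ψ q) K x) (hK : Convex ℝ K) (hψ : DifferentiableAt ℝ ψ x)
    (hx : x ∈ K) (hy : y ∈ K) :
    ℓ (x - y) ≤ fderiv ℝ ψ x (y - x) := by
  have h := hmin.localize.hasFDerivWithinAt_nonneg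
    (ℓ.hasFDerivAt.add hψ.hasFDerivAt).hasFDerivWithinAt
    (sub_mem_posTangentConeAt_of_segment_subset (hK.segment_subset hx hy))
  rw [add_apply, map_sub] at h
  rw [map_sub]
  linarith

noncomputable def bregmanDiv (ψ : E → ℝ) (y x : E) : ℝ :=
  ψ y - ψ x - fderiv ℝ ψ x (y - x)

end FirstOrderOptimality

namespace OFTRL

variable {E : Type*} [NormedAddCommGroup E] [NormedSpace ℝ E]
  (c m : ℕ → StrongDual ℝ E) (ψ : ℕ → E → ℝ) (p : ℕ → E) (u : E)

def cumulativeLoss (t : ℕ) : StrongDual ℝ E :=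
  ∑ τ ∈ Icc 1 (t - 1), c τ

theorem cumulativeLoss_one : cumulativeLoss c 1 = 0 := by
  simp [cumulativeLoss]

theorem cumulativeLoss_succ {t : ℕ} (ht : 1 ≤ t) :
    cumulativeLoss c (t + 1) = cumulativeLoss c t + c t := by
  obtain ⟨s, rfl⟩ := Nat.exists_eq_add_of_le' ht
  simp only [cumulativeLoss, Nat.add_sub_cancel]
  exact sum_Icc_succ_top (by omega) c

/-- `F u - F (p t) - m t (u - p t)`, where `F q = (cumulativeLoss c t + m t) q + ψ t q` is the
round-`t` objective. -/
def potential (t : ℕ) : ℝ :=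
  ψ t u - ψ t (p t) + cumulativeLoss c t (u - p t)

theorem potential_one : potential c ψ p u 1 = ψ 1 u - ψ 1 (p 1) := by
  simp [potential, cumulativeLoss_one]

variable {c m ψ p u}

theorem neg_potential_le {K : Set E} {t : ℕ}
    (hmin : IsMinOn (fun q ↦ (cumulativeLoss c t + m t) q + ψ t q) K (p t)) (hu : u ∈ K) :
    -potential c ψ p u t ≤ m t (u - p t) := by
  have h := hmin hu
  simp only [Set.mem_ofPred_eq, add_apply] at h
  simp only [potential, map_sub]
  linarith

theorem apply_sub_add_potential_succ_sub_le {K : Set E} (hK : Convex ℝ K) {t : ℕ} (ht : 1 ≤ t)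
    (hψ : DifferentiableAt ℝ (ψ t) (p t))
    (hmin : IsMinOn (fun q ↦ (cumulativeLoss c t + m t) q + ψ t q) K (p t))
    (hp : p t ∈ K) (hp' : p (t + 1) ∈ K) :
    c t (p t - u) + (potential c ψ p u (t + 1) - potential c ψ p u t) ≤
      (ψ (t + 1) u - ψ t u + ψ t (p (t + 1)) - ψ (t + 1) (p (t + 1)))
        + ((c t - m t) (p t - p (t + 1)) - bregmanDiv (ψ t) (p (t + 1)) (p t)) := by
  have hopt := hmin.apply_sub_le_fderiv hK hψ hp hp'
  simp only [potential, bregmanDiv, cumulativeLoss_succ c ht, add_apply,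
    sub_apply, map_sub] at hopt ⊢
  linarith

theorem regret_le {K : Set E} (hK : Convex ℝ K) {T : ℕ} (hT : 1 ≤ T)
    (hψ : ∀ t ∈ Icc 1 T, DifferentiableAt ℝ (ψ t) (p t))
    (hpK : ∀ t ∈ Icc 1 (T + 1), p t ∈ K)
    (hmin : ∀ t ∈ Icc 1 (T + 1),
      IsMinOn (fun q ↦ (cumulativeLoss c t + m t) q + ψ t q) K (p t))
    (hu : u ∈ K) :
    ∑ t ∈ Icc 1 T, c t (p t - u) ≤
      ψ 1 u - ψ 1 (p 1)
      + ∑ t ∈ Icc 1 T, (ψ (t + 1) u - ψ t u + ψ t (p (t + 1)) - ψ (t + 1) (p (t + 1)))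
      + ∑ t ∈ Icc 1 T, ((c t - m t) (p t - p (t + 1)) - bregmanDiv (ψ t) (p (t + 1)) (p t))
      + m (T + 1) (u - p (T + 1)) := by
  have hsum := sum_le_sum (s := Icc 1 T) fun t ht ↦ by
    obtain ⟨ht1, htT⟩ := mem_Icc.1 ht
    have ht' : t ∈ Icc 1 (T + 1) := mem_Icc.2 ⟨ht1, by omega⟩
    exact apply_sub_add_potential_succ_sub_le (u := u) hK ht1 (hψ t ht) (hmin t ht') (hpK t ht')
      (hpK (t + 1) (mem_Icc.2 ⟨by omega, by omega⟩))
  rw [sum_add_distrib, sum_Icc_sub hT, sum_add_distrib, potential_one] at hsum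
  have hlast := neg_potential_le (hmin (T + 1) (by simp)) hu
  linarith

end OFTRL

noncomputable def dotProductDual (ι : Type*) [Fintype ι] :
    (ι → ℝ) →ₗ[ℝ] StrongDual ℝ (ι → ℝ) :=
  LinearMap.toContinuousLinearMap.toLinearMap ∘ₗ (dotProductBilin ℝ ℝ).flip

theorem dotProductDual_apply {ι : Type*} [Fintype ι] (v q : ι → ℝ) :
    dotProductDual ι v q = ∑ i, q i * v i :=
  rfl

/-- Regret decomposition for optimistic follow-the-regularized-leader (OFTRL):
over a convex set `K ⊆ ℝ^ι`, if each `p t` minimizes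
`p ↦ ⟨p, ∑_{τ=1}^{t-1} c τ + m t⟩ + ψ t p` over `K`, then for every `u ∈ K` the
linearized regret is bounded by the penalty, stability and prediction terms,
where the Bregman divergence is `D_ψ(y, x) = ψ y - ψ x - ⟨∇ψ(x), y - x⟩`. -/
theorem oftrl_regret_decomposition
    {ι : Type*} [Fintype ι] (T : ℕ) (hT : 1 ≤ T)
    (K : Set (ι → ℝ)) (hK : Convex ℝ K)
    (c m : ℕ → ι → ℝ) (ψ : ℕ → (ι → ℝ) → ℝ)
    (hψ : ∀ t ∈ Finset.Icc 1 (T + 1), Differentiable ℝ (ψ t))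
    (p : ℕ → ι → ℝ)
    (hpK : ∀ t ∈ Finset.Icc 1 (T + 1), p t ∈ K)
    (hmin : ∀ t ∈ Finset.Icc 1 (T + 1), ∀ q ∈ K,
      (∑ i, p t i * ((∑ τ ∈ Finset.Icc 1 (t - 1), c τ i) + m t i)) + ψ t (p t) ≤
        (∑ i, q i * ((∑ τ ∈ Finset.Icc 1 (t - 1), c τ i) + m t i)) + ψ t q)
    (u : ι → ℝ) (hu : u ∈ K) :
    ∑ t ∈ Finset.Icc 1 T, ∑ i, (p t i - u i) * c t i ≤
      ψ 1 u - ψ 1 (p 1)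
      + ∑ t ∈ Finset.Icc 1 T,
          (ψ (t + 1) u - ψ t u + ψ t (p (t + 1)) - ψ (t + 1) (p (t + 1)))
      + ∑ t ∈ Finset.Icc 1 T,
          ((∑ i, (p t i - p (t + 1) i) * (c t i - m t i))
            - (ψ t (p (t + 1)) - ψ t (p t)
                - fderiv ℝ (ψ t) (p t) (p (t + 1) - p t)))
      + ∑ i, (u i - p (T + 1) i) * m (T + 1) i := by
  set ℓ := dotProductDual ι with hℓ
  have hobjective : ∀ t, OFTRL.cumulativeLoss (ℓ ∘ c) t + ℓ (m t) =
      ℓ (∑ τ ∈ Icc 1 (t - 1), c τ + m t) := by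
    simp [OFTRL.cumulativeLoss, map_sum, map_add]
  have hmin' : ∀ t ∈ Icc 1 (T + 1),
      IsMinOn (fun q ↦ (OFTRL.cumulativeLoss (ℓ ∘ c) t + ℓ (m t)) q + ψ t q) K (p t) := by
    intro t ht q hq
    simp only [Set.mem_ofPred_eq, hobjective]
    simpa only [hℓ, dotProductDual_apply, Finset.sum_apply, Pi.add_apply] using hmin t ht q hq
  have h := OFTRL.regret_le (m := ℓ ∘ m) hK hT
    (fun t ht ↦ hψ t (Icc_subset_Icc_right (by omega) ht) (p t)) hpK hmin' hu
  simp only [Function.comp_apply, ← map_sub] at h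
  exact h
end

section
/- Let x > 0 and a ∈ ℝ satisfy 1 + a·x > 0. Then the function y ↦ a·(x − y) − D_φ(y, x) on (0, ∞) attains its maximum value a·x − ln(1 + a·x) at the point y = x/(1 + a·x); that is, a·x − ln(1 + a·x) is the greatest element of the set { a·(x − y) − D_φ(y, x) : y > 0 }. -/
/-- For `x > 0` and `1 + a·x > 0`, the map `y ↦ a·(x - y) - D_φ(y, x)` on `(0, ∞)`,
where `φ(z) = -ln z` and `D_φ(y, x) = ln(x/y) + (y - x)/x`, attains its maximum value
`a·x - ln(1 + a·x)` at the point `y = x / (1 + a·x)`. -/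
theorem log_barrier_stability_max (x a : ℝ) (hx : 0 < x) (ha : 0 < 1 + a * x) :
    (a * (x - x / (1 + a * x))
        - (Real.log (x / (x / (1 + a * x))) + (x / (1 + a * x) - x) / x)
      = a * x - Real.log (1 + a * x)) ∧
    IsGreatest
      {v : ℝ | ∃ y : ℝ, 0 < y ∧ v = a * (x - y) - (Real.log (x / y) + (y - x) / x)}
      (a * x - Real.log (1 + a * x)) := by
  have hx' : x ≠ 0 := hx.ne'
  have ha' : (1 + a * x) ≠ 0 := ha.ne'
  have heq : a * (x - x / (1 + a * x))
        - (Real.log (x / (x / (1 + a * x))) + (x / (1 + a * x) - x) / x)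
      = a * x - Real.log (1 + a * x) := by
    have h1 : x / (x / (1 + a * x)) = 1 + a * x := by field_simp
    rw [h1]
    have h2 : a * (x - x / (1 + a * x)) - (x / (1 + a * x) - x) / x
        = a * x := by field_simp; ring
    linarith
  refine ⟨heq, ⟨x / (1 + a * x), div_pos hx ha, heq.symm⟩, ?_⟩
  rintro v ⟨y, hy, rfl⟩
  have hc : (0:ℝ) < (1 + a * x) / x := div_pos ha hx
  have hlog : Real.log ((1 + a * x) / x * y) ≤ (1 + a * x) / x * y - 1 :=
    Real.log_le_sub_one_of_pos (mul_pos hc hy)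
  rw [Real.log_mul hc.ne' hy.ne', Real.log_div ha' hx'] at hlog
  have hxy : Real.log (x / y) = Real.log x - Real.log y :=
    Real.log_div hx' hy.ne'
  have h3 : (1 + a * x) / x * y = a * y + y / x := by field_simp; ring
  have h4 : (y - x) / x = y / x - 1 := by field_simp
  rw [hxy, h4]
  rw [h3] at hlog
  linarith
end

section
/- Let ι be a finite type with n = |ι| ≥ 1, let T ≥ 1 be an integer, and let H > 0 be real. Let K ⊆ ℝ^ι be a convex set such that every p ∈ K satisfies p(i) ≥ 0 for all i ∈ ι and Σ_{i∈ι} p(i) ≤ H. Suppose that for each i ∈ ι there exists z_i ∈ K with z_i(i) > 0 and p(i) ≤ z_i(i) for all p ∈ K. For t = 1,…,T+1 let η_t : ι → (0, ∞) satisfy η_{t+1}(i) ≤ η_t(i) for all t ≤ T and i, with η_1(i) = η₁ constant in i; for t = 1,…,T let ℓ_t ∈ ℝ^ι, and for t = 1,…,T+1 let m_t ∈ ℝ^ι. For t = 1,…,T+1 let p_t ∈ K with p_t(i) > 0 for all i be a minimizer over K of p ↦ ⟨p, Σ_{τ=1}^{t−1} ℓ_τ + m_t⟩ + Σ_{i∈ι}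 (1/η_t(i)) · ln(1/p(i)). Assume that η_t(i)·p_t(i)·(ℓ_t(i) − m_t(i)) ≥ −1/2 for all t ≤ T and all i. Then for every u ∈ K: Σ_{t=1}^{T} ⟨p_t − u, ℓ_t⟩ ≤ n·ln(nT)/η₁ + Σ_{t=1}^{T} Σ_{i∈ι} (1/η_{t+1}(i) − 1/η_t(i))·ln(nT) + Σ_{t=1}^{T} Σ_{i∈ι} η_t(i)·p_t(i)²·(ℓ_t(i) − m_t(i))² + (1/T)·Σ_{t=1}^{T} ⟨−u + (1/n)·Σ_{i∈ι} z_i, ℓ_t⟩ + 2H·max_{i∈ι} |m_{T+1}(i)|. -/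
/-!
The standard optimistic-FTRL analysis. By the first-order optimality condition, the minimiser
`p t` of the round-`t` objective `F t` satisfies `F t (p t) + D t ≤ F t (p (t + 1))`, where
`D t` is the Bregman divergence of the log barrier between `p (t + 1)` and `p t`. Summing
these inequalities telescopes, and comparing `p (T + 1)` with a comparator `v` bounds the
regret against `v` by three terms: a stability term `⟪p t - p (t + 1), ℓ t - m t⟫ - D t` for
each round, a penalty term made of the regularisers, and the last hint
`⟪v - p (T + 1), m (T + 1)⟫`. Coordinatewise, stability is at most `η p² (ℓ - m)²` because
`log (1 + x) ≥ x - x²` for `x ≥ -1/2`. The log barrier blows up at the boundary, so `u` is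
replaced by `v = (1 - 1/T) u + (1/T) (1/n) ∑ z i`. This `v` is positive and `p ≤ n T v` on
`K`, so each unit of `1/η` in the penalty costs at most `log (n T)`. Replacing `u` by `v`
costs the `1/T` term, and the last hint costs at most `2 H max |m (T + 1)|`.
-/

open Finset Matrix Real

lemma sub_sq_le_log_one_add {x : ℝ} (hx : -(1 / 2) ≤ x) : x - x ^ 2 ≤ log (1 + x) := by
  -- a first-order lower bound on `exp` suffices for `x ≥ 0`, a second-order one for `x ≤ 0`
  have key : 1 ≤ exp (x ^ 2 - x) * (1 + x) := by
    rcases le_total 0 x with h | h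
    · nlinarith [add_one_le_exp (x ^ 2 - x), pow_nonneg h 3]
    · nlinarith [quadratic_le_exp_of_nonneg (show 0 ≤ x ^ 2 - x by nlinarith)]
  rw [le_log_iff_exp_le (by linarith)]
  have hinv : exp (x - x ^ 2) * exp (x ^ 2 - x) = 1 := by rw [← exp_add]; simp
  nlinarith [exp_pos (x - x ^ 2)]

lemma sub_mul_sub_logBregman_le {a b e g : ℝ} (ha : 0 < a) (hb : 0 < b) (he : 0 < e)
    (h : -(1 / 2) ≤ e * a * g) :
    (a - b) * g - 1 / e * (b / a - 1 - log (b / a)) ≤ e * a ^ 2 * g ^ 2 := by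
  set x := e * a * g
  set r := b / a
  have hr : 0 < r := div_pos hb ha
  -- the maximum over `r > 0` of `x (1 - r) - (r - 1 - log r)` is `x - log (1 + x)`
  have hlog : log r + log (1 + x) ≤ r * (1 + x) - 1 := by
    rw [← log_mul hr.ne' (by linarith)]
    exact log_le_sub_one_of_pos (by nlinarith)
  have key : x * (1 - r) - (r - 1 - log r) ≤ x ^ 2 := by
    linarith [sub_sq_le_log_one_add h]
  calc (a - b) * g - 1 / e * (r - 1 - log r)
      = 1 / e * (x * (1 - r) - (r - 1 - log r)) := by simp only [x, r]; field_simp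
    _ ≤ 1 / e * x ^ 2 := by gcongr
    _ = e * a ^ 2 * g ^ 2 := by simp only [x]; field_simp

lemma sum_Icc_one_sub (f : ℕ → ℝ) (T : ℕ) :
    ∑ t ∈ Icc 1 T, (f (t + 1) - f t) = f (T + 1) - f 1 := by
  rw [← Ico_add_one_right_eq_Icc, sum_Ico_sub f (by omega)]

lemma weighted_telescope_le (a w : ℕ → ℝ) {T : ℕ} {y B : ℝ} (ha₁ : 0 ≤ a 1)
    (ha : ∀ t ∈ Icc 1 T, a t ≤ a (t + 1)) (hw : ∀ s ∈ Icc 1 (T + 1), y - w s ≤ B) :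
    a (T + 1) * y - a 1 * w 1 - ∑ t ∈ Icc 1 T, (a (t + 1) - a t) * w (t + 1) ≤
      a 1 * B + ∑ t ∈ Icc 1 T, (a (t + 1) - a t) * B := by
  have htel : a (T + 1) = a 1 + ∑ t ∈ Icc 1 T, (a (t + 1) - a t) := by
    rw [sum_Icc_one_sub]; ring
  have h₁ : a 1 * (y - w 1) ≤ a 1 * B := mul_le_mul_of_nonneg_left (hw 1 (by simp)) ha₁
  have h₂ : ∑ t ∈ Icc 1 T, (a (t + 1) - a t) * (y - w (t + 1)) ≤
      ∑ t ∈ Icc 1 T, (a (t + 1) - a t) * B :=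
    sum_le_sum fun t ht => mul_le_mul_of_nonneg_left
      (hw (t + 1) (by simp at ht ⊢; omega)) (sub_nonneg.2 (ha t ht))
  rw [htel, add_mul, sum_mul]
  simp only [mul_sub, sum_sub_distrib] at h₂
  linarith

lemma convex_setOf_forall_pos {κ : Type*} : Convex ℝ {q : κ → ℝ | ∀ i, 0 < q i} := by
  simpa [Set.pi, Set.mem_Ioi] using convex_pi (s := Set.univ) fun i _ => convex_Ioi (0 : ℝ)

lemma hasDerivAt_mul_add_log_one_div (c a : ℝ) {x : ℝ} (hx : 0 < x) :
    HasDerivAt (fun y => y * c + a * log (1 / y)) (c - a / x) x := by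
  have e : (fun y => y * c + a * log (1 / y)) = fun y => y * c - a * log y := by
    funext y; rw [one_div, log_inv]; ring
  rw [e]
  exact (((hasDerivAt_id' x).mul_const c).sub
    ((hasDerivAt_log hx.ne').const_mul a)).congr_deriv (by ring)

section LogBarrier

variable {ι : Type*} [Fintype ι]

noncomputable def logBarrier (η q : ι → ℝ) : ℝ := ∑ i, 1 / η i * log (1 / q i)

noncomputable def logBarrierBregman (η q p : ι → ℝ) : ℝ :=
  ∑ i, 1 / η i * (q i / p i - 1 - log (q i / p i))

theorem IsMinOn.add_logBarrierBregman_le {K : Set (ι → ℝ)} {c η p q : ι → ℝ}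
    (hmin : IsMinOn (fun q => q ⬝ᵥ c + logBarrier η q) (K ∩ {q | ∀ i, 0 < q i}) p)
    (hK : Convex ℝ K) (hp : p ∈ K ∩ {q | ∀ i, 0 < q i}) (hq : q ∈ K ∩ {q | ∀ i, 0 < q i}) :
    p ⬝ᵥ c + logBarrier η p + logBarrierBregman η q p ≤ q ⬝ᵥ c + logBarrier η q := by
  have hf : (fun q => q ⬝ᵥ c + logBarrier η q) =
      fun q => ∑ i, (q i * c i + 1 / η i * log (1 / q i)) := by
    ext q; simp [dotProduct, logBarrier, sum_add_distrib]
  have hderiv : HasFDerivAt (fun q => q ⬝ᵥ c + logBarrier η q)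
      (∑ i, (c i - 1 / η i / p i) •
        ContinuousLinearMap.proj (R := ℝ) (φ := fun _ : ι => ℝ) i) p := by
    rw [hf]
    refine HasFDerivAt.fun_sum fun i _ => ?_
    exact (hasDerivAt_mul_add_log_one_div (c i) (1 / η i) (hp.2 i)).comp_hasFDerivAt
      (f := fun q : ι → ℝ => q i) p (hasFDerivAt_apply (𝕜 := ℝ) i p)
  have hfoc := hmin.localize.hasFDerivWithinAt_nonneg hderiv.hasFDerivWithinAt
    (sub_mem_posTangentConeAt_of_segment_subset
      ((hK.inter convex_setOf_forall_pos).segment_subset hp hq))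
  simp only [one_div, _root_.sum_apply, _root_.smul_apply, ContinuousLinearMap.proj_apply,
    Pi.sub_apply, smul_eq_mul] at hfoc
  have hgap : q ⬝ᵥ c + logBarrier η q - (p ⬝ᵥ c + logBarrier η p + logBarrierBregman η q p) =
      ∑ i, (c i - (η i)⁻¹ / p i) * (q i - p i) := by
    simp only [dotProduct, logBarrier, logBarrierBregman, ← sum_add_distrib, ← sum_sub_distrib]
    refine sum_congr rfl fun i _ => ?_
    have hpi := (hp.2 i).ne'
    rw [log_div (hq.2 i).ne' hpi]
    simp only [one_div, log_inv]
    field_simp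
    ring
  linarith

theorem sub_dotProduct_sub_logBarrierBregman_le {η p q g : ι → ℝ} (hη : ∀ i, 0 < η i)
    (hp : ∀ i, 0 < p i) (hq : ∀ i, 0 < q i) (hg : ∀ i, -(1 / 2) ≤ η i * p i * g i) :
    (p - q) ⬝ᵥ g - logBarrierBregman η q p ≤ ∑ i, η i * p i ^ 2 * g i ^ 2 := by
  rw [logBarrierBregman, dotProduct, ← sum_sub_distrib]
  exact sum_le_sum fun i _ => sub_mul_sub_logBregman_le (hp i) (hq i) (hη i) (hg i)

theorem logBarrier_penalty_le {η p : ℕ → ι → ℝ} {v : ι → ℝ} {T : ℕ} {C : ℝ}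
    (hη : ∀ t ∈ Icc 1 (T + 1), ∀ i, 0 < η t i)
    (hηanti : ∀ t ∈ Icc 1 T, ∀ i, η (t + 1) i ≤ η t i)
    (hp : ∀ s ∈ Icc 1 (T + 1), ∀ i, 0 < p s i) (hv : ∀ i, 0 < v i)
    (hpv : ∀ s ∈ Icc 1 (T + 1), ∀ i, p s i ≤ C * v i) :
    logBarrier (η (T + 1)) v - logBarrier (η 1) (p 1)
        - ∑ t ∈ Icc 1 T, (logBarrier (η (t + 1)) (p (t + 1)) - logBarrier (η t) (p (t + 1))) ≤
      ∑ i, 1 / η 1 i * log C + ∑ t ∈ Icc 1 T, ∑ i, (1 / η (t + 1) i - 1 / η t i) * log C := by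
  have hlog : ∀ s ∈ Icc 1 (T + 1), ∀ i, log (1 / v i) - log (1 / p s i) ≤ log C := by
    intro s hs i
    have hC : 0 < C := pos_of_mul_pos_left ((hp s hs i).trans_le (hpv s hs i)) (hv i).le
    have := log_le_log (hp s hs i) (hpv s hs i)
    rw [log_mul hC.ne' (hv i).ne'] at this
    simp only [one_div, log_inv]
    linarith
  have hcoord : ∀ i, 1 / η (T + 1) i * log (1 / v i) - 1 / η 1 i * log (1 / p 1 i)
      - ∑ t ∈ Icc 1 T, (1 / η (t + 1) i - 1 / η t i) * log (1 / p (t + 1) i) ≤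
      1 / η 1 i * log C + ∑ t ∈ Icc 1 T, (1 / η (t + 1) i - 1 / η t i) * log C := fun i =>
    weighted_telescope_le (fun t => 1 / η t i) (fun s => log (1 / p s i))
      (one_div_pos.2 (hη 1 (by simp) i)).le
      (fun t ht => one_div_le_one_div_of_le (hη (t + 1) (by simp at ht ⊢; omega) i)
        (hηanti t ht i))
      (fun s hs => hlog s hs i)
  calc _ = ∑ i, (1 / η (T + 1) i * log (1 / v i) - 1 / η 1 i * log (1 / p 1 i)
      - ∑ t ∈ Icc 1 T, (1 / η (t + 1) i - 1 / η t i) * log (1 / p (t + 1) i)) := by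
        simp only [logBarrier, sub_mul, sum_sub_distrib]
        rw [sum_comm (s := Icc 1 T), sum_comm (s := Icc 1 T)]
    _ ≤ _ := sum_le_sum fun i _ => hcoord i
    _ = _ := by rw [sum_add_distrib, sum_comm (s := univ)]

noncomputable def oftrlObjective (ψ : ℕ → (ι → ℝ) → ℝ) (ℓ m : ℕ → ι → ℝ) (t : ℕ)
    (q : ι → ℝ) : ℝ :=
  q ⬝ᵥ (∑ τ ∈ Icc 1 (t - 1), ℓ τ + m t) + ψ t q

theorem oftrl_regret_le (ψ : ℕ → (ι → ℝ) → ℝ) (ℓ m p : ℕ → ι → ℝ) (D : ℕ → ℝ) {T : ℕ}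
    {v : ι → ℝ}
    (hstep : ∀ t ∈ Icc 1 T,
      oftrlObjective ψ ℓ m t (p t) + D t ≤ oftrlObjective ψ ℓ m t (p (t + 1)))
    (hlast : oftrlObjective ψ ℓ m (T + 1) (p (T + 1)) ≤ oftrlObjective ψ ℓ m (T + 1) v) :
    ∑ t ∈ Icc 1 T, (p t - v) ⬝ᵥ ℓ t ≤
      ∑ t ∈ Icc 1 T, ((p t - p (t + 1)) ⬝ᵥ (ℓ t - m t) - D t)
      + (ψ (T + 1) v - ψ 1 (p 1) - ∑ t ∈ Icc 1 T, (ψ (t + 1) (p (t + 1)) - ψ t (p (t + 1))))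
      + (v - p (T + 1)) ⬝ᵥ m (T + 1) := by
  set L : ℕ → ι → ℝ := fun t => ∑ τ ∈ Icc 1 (t - 1), ℓ τ
  -- `G t` is the round-`t` objective at `p t` without the hint `m t`
  set G : ℕ → ℝ := fun t => p t ⬝ᵥ L t + ψ t (p t)
  have hround : ∀ t ∈ Icc 1 T,
      (p t - v) ⬝ᵥ ℓ t - ((p t - p (t + 1)) ⬝ᵥ (ℓ t - m t) - D t)
        + (ψ (t + 1) (p (t + 1)) - ψ t (p (t + 1))) ≤ G (t + 1) - G t - v ⬝ᵥ ℓ t := by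
    intro t ht
    obtain ⟨s, rfl⟩ : ∃ s, t = s + 1 := ⟨t - 1, by simp at ht; omega⟩
    have hL : L (s + 1 + 1) = L (s + 1) + ℓ (s + 1) := sum_Icc_succ_top (by omega) ℓ
    have := hstep (s + 1) ht
    simp only [oftrlObjective, G, hL, dotProduct_add, sub_dotProduct, dotProduct_sub] at this ⊢
    linarith
  have hvL : ∑ t ∈ Icc 1 T, v ⬝ᵥ ℓ t = v ⬝ᵥ L (T + 1) := by simp [L, dotProduct_sum]
  have hsum : ∑ t ∈ Icc 1 T, (p t - v) ⬝ᵥ ℓ t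
      - ∑ t ∈ Icc 1 T, ((p t - p (t + 1)) ⬝ᵥ (ℓ t - m t) - D t)
      + ∑ t ∈ Icc 1 T, (ψ (t + 1) (p (t + 1)) - ψ t (p (t + 1)))
      ≤ G (T + 1) - G 1 - v ⬝ᵥ L (T + 1) := by
    rw [← hvL, ← sum_Icc_one_sub G T, ← sum_sub_distrib, ← sum_sub_distrib, ← sum_add_distrib]
    exact sum_le_sum hround
  have hG₁ : G 1 = ψ 1 (p 1) := by simp [G, L]
  simp only [oftrlObjective, dotProduct_add] at hlast
  simp only [G, sub_dotProduct] at hsum hG₁ ⊢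
  linarith

theorem oftrl_logBarrier_regret_le {K : Set (ι → ℝ)} (hK : Convex ℝ K) {T : ℕ}
    {η ℓ m p : ℕ → ι → ℝ}
    (hη : ∀ t ∈ Icc 1 (T + 1), ∀ i, 0 < η t i)
    (hηanti : ∀ t ∈ Icc 1 T, ∀ i, η (t + 1) i ≤ η t i)
    (hpS : ∀ t ∈ Icc 1 (T + 1), p t ∈ K ∩ {q | ∀ i, 0 < q i})
    (hmin : ∀ t ∈ Icc 1 (T + 1), IsMinOn (oftrlObjective (fun t => logBarrier (η t)) ℓ m t)
      (K ∩ {q | ∀ i, 0 < q i}) (p t))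
    (hstable : ∀ t ∈ Icc 1 T, ∀ i, -(1 / 2) ≤ η t i * p t i * (ℓ t i - m t i))
    {v : ι → ℝ} (hv : v ∈ K ∩ {q | ∀ i, 0 < q i}) {C : ℝ}
    (hpv : ∀ s ∈ Icc 1 (T + 1), ∀ i, p s i ≤ C * v i) :
    ∑ t ∈ Icc 1 T, (p t - v) ⬝ᵥ ℓ t ≤
      ∑ i, 1 / η 1 i * log C + ∑ t ∈ Icc 1 T, ∑ i, (1 / η (t + 1) i - 1 / η t i) * log C
      + ∑ t ∈ Icc 1 T, ∑ i, η t i * p t i ^ 2 * (ℓ t i - m t i) ^ 2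
      + (v - p (T + 1)) ⬝ᵥ m (T + 1) := by
  have hmem : ∀ t ∈ Icc 1 T, t ∈ Icc 1 (T + 1) ∧ t + 1 ∈ Icc 1 (T + 1) := fun t ht => by
    simp only [mem_Icc] at ht ⊢; omega
  have hregret := oftrl_regret_le (fun t => logBarrier (η t)) ℓ m p
    (fun t => logBarrierBregman (η t) (p (t + 1)) (p t))
    (fun t ht => (hmin t (hmem t ht).1).add_logBarrierBregman_le hK
      (hpS t (hmem t ht).1) (hpS (t + 1) (hmem t ht).2))
    (isMinOn_iff.1 (hmin (T + 1) (by simp)) v hv)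
  have hstability : ∑ t ∈ Icc 1 T, ((p t - p (t + 1)) ⬝ᵥ (ℓ t - m t)
      - logBarrierBregman (η t) (p (t + 1)) (p t)) ≤
      ∑ t ∈ Icc 1 T, ∑ i, η t i * p t i ^ 2 * (ℓ t i - m t i) ^ 2 :=
    sum_le_sum fun t ht => sub_dotProduct_sub_logBarrierBregman_le (hη t (hmem t ht).1)
      (hpS t (hmem t ht).1).2 (hpS (t + 1) (hmem t ht).2).2 (hstable t ht)
  have hpenalty := logBarrier_penalty_le hη hηanti (fun s hs => (hpS s hs).2) hv.2 hpv
  linarith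

theorem sub_dotProduct_le_two_mul_iSup_abs {H : ℝ} {v p g : ι → ℝ} (hv : ∀ i, 0 ≤ v i)
    (hp : ∀ i, 0 ≤ p i) (hvH : ∑ i, v i ≤ H) (hpH : ∑ i, p i ≤ H) :
    (v - p) ⬝ᵥ g ≤ 2 * H * ⨆ i, |g i| := by
  set M := ⨆ i, |g i|
  have hM : ∀ i, |g i| ≤ M := le_ciSup (Set.finite_range _).bddAbove
  have hM₀ : 0 ≤ M := Real.iSup_nonneg fun i => abs_nonneg _
  calc (v - p) ⬝ᵥ g ≤ ∑ i, (v i + p i) * M := sum_le_sum fun i _ => by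
        have hvp : |v i - p i| ≤ v i + p i := abs_le.2 ⟨by linarith [hv i], by linarith [hp i]⟩
        calc (v i - p i) * g i ≤ |v i - p i| * |g i| := (le_abs_self _).trans (abs_mul _ _).le
          _ ≤ (v i + p i) * M := mul_le_mul hvp (hM i) (abs_nonneg _) (by linarith [hv i, hp i])
    _ = (∑ i, v i + ∑ i, p i) * M := by rw [← sum_add_distrib, sum_mul]
    _ ≤ 2 * H * M := by nlinarith

noncomputable def mixedComparator (T : ℕ) (u : ι → ℝ) (z : ι → ι → ℝ) : ι → ℝ :=
  fun i => (1 - 1 / T) * u i + 1 / T * (1 / Fintype.card ι * ∑ j, z j i)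

variable {K : Set (ι → ℝ)} {z : ι → ι → ℝ} {T : ℕ} {u : ι → ℝ}

theorem mixedComparator_mem (hK : Convex ℝ K) (hzK : ∀ j, z j ∈ K)
    (hι : 1 ≤ Fintype.card ι) (hT : 1 ≤ T) (hu : u ∈ K) : mixedComparator T u z ∈ K := by
  have hN : (0 : ℝ) < Fintype.card ι := by exact_mod_cast hι
  have hT' : (1 : ℝ) ≤ T := by exact_mod_cast hT
  have havg : (∑ j, (1 / Fintype.card ι : ℝ) • z j) ∈ K :=
    hK.sum_mem (fun _ _ => by positivity) (by simp [hN.ne']) fun j _ => hzK j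
  have hmix := hK hu havg (a := 1 - 1 / T) (b := 1 / T)
    (sub_nonneg.2 (div_le_one_of_le₀ hT' (by positivity))) (by positivity) (by ring)
  convert hmix using 1
  ext i
  simp [mixedComparator, Finset.sum_apply, Finset.mul_sum]

theorem div_le_mixedComparator (hKnonneg : ∀ q ∈ K, ∀ i, 0 ≤ q i) (hzK : ∀ j, z j ∈ K)
    (hT : 1 ≤ T) (hu : u ∈ K) (i : ι) :
    1 / T * (1 / Fintype.card ι * z i i) ≤ mixedComparator T u z i := by
  have hT' : (1 : ℝ) ≤ T := by exact_mod_cast hT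
  have hu' : 0 ≤ (1 - 1 / T) * u i :=
    mul_nonneg (sub_nonneg.2 (div_le_one_of_le₀ hT' (by positivity))) (hKnonneg u hu i)
  have hz : z i i ≤ ∑ j, z j i :=
    single_le_sum (f := fun j => z j i) (fun j _ => hKnonneg (z j) (hzK j) i) (mem_univ i)
  have : 1 / T * (1 / Fintype.card ι * z i i) ≤ 1 / T * (1 / Fintype.card ι * ∑ j, z j i) := by
    gcongr
  unfold mixedComparator
  linarith

theorem mixedComparator_pos (hKnonneg : ∀ q ∈ K, ∀ i, 0 ≤ q i) (hzK : ∀ j, z j ∈ K)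
    (hzpos : ∀ i, 0 < z i i) (hT : 1 ≤ T) (hu : u ∈ K) (i : ι) :
    0 < mixedComparator T u z i := by
  have hT' : (0 : ℝ) < T := by exact_mod_cast hT
  have hN : (0 : ℝ) < Fintype.card ι := by exact_mod_cast Fintype.card_pos_iff.2 ⟨i⟩
  have := hzpos i
  exact lt_of_lt_of_le (by positivity) (div_le_mixedComparator hKnonneg hzK hT hu i)

theorem le_card_mul_mixedComparator (hKnonneg : ∀ q ∈ K, ∀ i, 0 ≤ q i) (hzK : ∀ j, z j ∈ K)
    (hzmax : ∀ i, ∀ q ∈ K, q i ≤ z i i) (hι : 1 ≤ Fintype.card ι) (hT : 1 ≤ T) (hu : u ∈ K)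
    {q : ι → ℝ} (hq : q ∈ K) (i : ι) :
    q i ≤ Fintype.card ι * T * mixedComparator T u z i := by
  have hN : (0 : ℝ) < Fintype.card ι := by exact_mod_cast hι
  have hT' : (0 : ℝ) < T := by exact_mod_cast hT
  calc q i ≤ z i i := hzmax i q hq
    _ = Fintype.card ι * T * (1 / T * (1 / Fintype.card ι * z i i)) := by field_simp
    _ ≤ _ := by gcongr; exact div_le_mixedComparator hKnonneg hzK hT hu i

theorem sub_dotProduct_eq_sub_mixedComparator_dotProduct_add (p ℓ : ι → ℝ) :
    (p - u) ⬝ᵥ ℓ = (p - mixedComparator T u z) ⬝ᵥ ℓ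
      + 1 / T * ∑ i, (-u i + 1 / Fintype.card ι * ∑ j, z j i) * ℓ i := by
  simp only [dotProduct, mul_sum (s := univ) (f := fun i => _ * ℓ i), ← sum_add_distrib]
  refine sum_congr rfl fun i _ => ?_
  simp only [mixedComparator, Pi.sub_apply]
  ring

end LogBarrier

theorem oftrl_log_barrier_global_general
    {ι : Type*} [Fintype ι] (hn : 1 ≤ Fintype.card ι)
    (T : ℕ) (hT : 1 ≤ T) (H : ℝ)
    (K : Set (ι → ℝ)) (hK : Convex ℝ K)
    (hKnonneg : ∀ p ∈ K, ∀ i, 0 ≤ p i)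
    (hKsum : ∀ p ∈ K, ∑ i, p i ≤ H)
    (z : ι → (ι → ℝ)) (hzK : ∀ i, z i ∈ K) (hzpos : ∀ i, 0 < z i i)
    (hzmax : ∀ i, ∀ p ∈ K, p i ≤ z i i)
    (η : ℕ → ι → ℝ)
    (hηpos : ∀ t ∈ Finset.Icc 1 (T + 1), ∀ i, 0 < η t i)
    (hηdec : ∀ t ∈ Finset.Icc 1 T, ∀ i, η (t + 1) i ≤ η t i)
    (η₁ : ℝ) (hη1 : ∀ i, η 1 i = η₁)
    (ℓ : ℕ → ι → ℝ) (m : ℕ → ι → ℝ)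
    (p : ℕ → ι → ℝ)
    (hpK : ∀ t ∈ Finset.Icc 1 (T + 1), p t ∈ K)
    (hppos : ∀ t ∈ Finset.Icc 1 (T + 1), ∀ i, 0 < p t i)
    (hmin : ∀ t ∈ Finset.Icc 1 (T + 1), ∀ q ∈ K, (∀ i, 0 < q i) →
      (∑ i, p t i * ((∑ τ ∈ Finset.Icc 1 (t - 1), ℓ τ i) + m t i))
          + ∑ i, (1 / η t i) * Real.log (1 / p t i) ≤
        (∑ i, q i * ((∑ τ ∈ Finset.Icc 1 (t - 1), ℓ τ i) + m t i))
          + ∑ i, (1 / η t i) * Real.log (1 / q i))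
    (hcond : ∀ t ∈ Finset.Icc 1 T, ∀ i,
      η t i * p t i * (ℓ t i - m t i) ≥ -(1 / 2))
    (u : ι → ℝ) (hu : u ∈ K) :
    ∑ t ∈ Finset.Icc 1 T, ∑ i, (p t i - u i) * ℓ t i ≤
      (Fintype.card ι : ℝ) * Real.log ((Fintype.card ι : ℝ) * T) / η₁
      + ∑ t ∈ Finset.Icc 1 T, ∑ i,
          (1 / η (t + 1) i - 1 / η t i) * Real.log ((Fintype.card ι : ℝ) * T)
      + ∑ t ∈ Finset.Icc 1 T, ∑ i, η t i * (p t i) ^ 2 * (ℓ t i - m t i) ^ 2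
      + (1 / T) * ∑ t ∈ Finset.Icc 1 T, ∑ i,
          (-u i + (1 / (Fintype.card ι : ℝ)) * ∑ j, z j i) * ℓ t i
      + 2 * H * (⨆ i, |m (T + 1) i|) := by
  set v := mixedComparator T u z
  have hv : v ∈ K ∩ {q | ∀ i, 0 < q i} :=
    ⟨mixedComparator_mem hK hzK hn hT hu, mixedComparator_pos hKnonneg hzK hzpos hT hu⟩
  have hminOn : ∀ t ∈ Icc 1 (T + 1), IsMinOn (oftrlObjective (fun t => logBarrier (η t)) ℓ m t)
      (K ∩ {q | ∀ i, 0 < q i}) (p t) := fun t ht q hq => by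
    simpa [oftrlObjective, logBarrier, dotProduct, Finset.sum_apply] using hmin t ht q hq.1 hq.2
  have hregret := oftrl_logBarrier_regret_le hK hηpos hηdec
    (fun t ht => ⟨hpK t ht, hppos t ht⟩) hminOn hcond hv
    (fun s hs => le_card_mul_mixedComparator hKnonneg hzK hzmax hn hT hu (hpK s hs))
  have hlast : p (T + 1) ∈ K := hpK (T + 1) (by simp)
  have hhint := sub_dotProduct_le_two_mul_iSup_abs (hKnonneg v hv.1) (hKnonneg _ hlast)
    (hKsum v hv.1) (hKsum _ hlast) (g := m (T + 1))
  have hη₁ : ∑ i, 1 / η 1 i * log (Fintype.card ι * T) =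
      Fintype.card ι * log (Fintype.card ι * T) / η₁ := by
    simp [hη1]; ring
  have hsplit : ∑ t ∈ Icc 1 T, ∑ i, (p t i - u i) * ℓ t i = ∑ t ∈ Icc 1 T, (p t - v) ⬝ᵥ ℓ t
      + 1 / T * ∑ t ∈ Icc 1 T, ∑ i, (-u i + 1 / Fintype.card ι * ∑ j, z j i) * ℓ t i := by
    rw [mul_sum (s := Icc 1 T), ← sum_add_distrib]
    exact sum_congr rfl fun t _ => sub_dotProduct_eq_sub_mixedComparator_dotProduct_add _ _
  linarith

/-- Regret bound for optimistic FTRL with the log-barrier regularizer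
`p ↦ ∑ i, (1/η t i) · ln(1/p i)` over a convex set `K ⊆ ℝ^ι` of nonnegative vectors with
`∑ i, p i ≤ H` (the occupancy-measure polytope), where `z i ∈ K` maximizes the `i`-th
coordinate over `K`. -/
theorem oftrl_log_barrier_global
    {ι : Type*} [Fintype ι] [Nonempty ι] (hn : 1 ≤ Fintype.card ι)
    (T : ℕ) (hT : 1 ≤ T) (H : ℝ) (hH : 0 < H)
    (K : Set (ι → ℝ)) (hK : Convex ℝ K)
    (hKnonneg : ∀ p ∈ K, ∀ i, 0 ≤ p i)
    (hKsum : ∀ p ∈ K, ∑ i, p i ≤ H)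
    (z : ι → (ι → ℝ)) (hzK : ∀ i, z i ∈ K) (hzpos : ∀ i, 0 < z i i)
    (hzmax : ∀ i, ∀ p ∈ K, p i ≤ z i i)
    (η : ℕ → ι → ℝ)
    (hηpos : ∀ t ∈ Finset.Icc 1 (T + 1), ∀ i, 0 < η t i)
    (hηdec : ∀ t ∈ Finset.Icc 1 T, ∀ i, η (t + 1) i ≤ η t i)
    (η₁ : ℝ) (hη1 : ∀ i, η 1 i = η₁)
    (ℓ : ℕ → ι → ℝ) (m : ℕ → ι → ℝ)
    (p : ℕ → ι → ℝ)
    (hpK : ∀ t ∈ Finset.Icc 1 (T + 1), p t ∈ K)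
    (hppos : ∀ t ∈ Finset.Icc 1 (T + 1), ∀ i, 0 < p t i)
    (hmin : ∀ t ∈ Finset.Icc 1 (T + 1), ∀ q ∈ K, (∀ i, 0 < q i) →
      (∑ i, p t i * ((∑ τ ∈ Finset.Icc 1 (t - 1), ℓ τ i) + m t i))
          + ∑ i, (1 / η t i) * Real.log (1 / p t i) ≤
        (∑ i, q i * ((∑ τ ∈ Finset.Icc 1 (t - 1), ℓ τ i) + m t i))
          + ∑ i, (1 / η t i) * Real.log (1 / q i))
    (hcond : ∀ t ∈ Finset.Icc 1 T, ∀ i,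
      η t i * p t i * (ℓ t i - m t i) ≥ -(1 / 2))
    (u : ι → ℝ) (hu : u ∈ K) :
    ∑ t ∈ Finset.Icc 1 T, ∑ i, (p t i - u i) * ℓ t i ≤
      (Fintype.card ι : ℝ) * Real.log ((Fintype.card ι : ℝ) * T) / η₁
      + ∑ t ∈ Finset.Icc 1 T, ∑ i,
          (1 / η (t + 1) i - 1 / η t i) * Real.log ((Fintype.card ι : ℝ) * T)
      + ∑ t ∈ Finset.Icc 1 T, ∑ i, η t i * (p t i) ^ 2 * (ℓ t i - m t i) ^ 2
      + (1 / T) * ∑ t ∈ Finset.Icc 1 T, ∑ i,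
          (-u i + (1 / (Fintype.card ι : ℝ)) * ∑ j, z j i) * ℓ t i
      + 2 * H * (⨆ i, |m (T + 1) i|) :=
  oftrl_log_barrier_global_general hn T hT H K hK hKnonneg hKsum z hzK hzpos hzmax η hηpos hηdec η₁
    hη1 ℓ m p hpK hppos hmin hcond u hu
end

section
/- Let H ≥ 1 be a real number and T ≥ 2 an integer. Let ζ_1,…,ζ_T be real numbers with 0 ≤ ζ_t ≤ 1 for every t. Define positive reals η_1, η_2, …, η_{T+1} recursively by η_1 = 1/(2H) and 1/η_{t+1} = 1/η_t + η_t·ζ_t/ln(T). Then for every t ∈ {1,…,T}: η_t ≤ √(ln T) / √(2H²·ln(T) + Σ_{τ=1}^{t} ζ_τ). -/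
/-- Learning-rate bound for the adaptive log-barrier learning rates in the
global-optimization algorithm: if `η 1 = 1/(2H)` and
`1/η (t+1) = 1/η t + η t · ζ t / ln T` with `0 ≤ ζ t ≤ 1`, then
`η t ≤ √(ln T) / √(2·H²·ln T + ∑_{τ=1}^{t} ζ τ)` for every `t ∈ {1,…,T}`. -/
theorem learning_rate_bound_global
    (T : ℕ) (hT : 2 ≤ T) (H : ℝ) (hH : 1 ≤ H)
    (ζ : ℕ → ℝ) (hζ : ∀ t ∈ Finset.Icc 1 T, 0 ≤ ζ t ∧ ζ t ≤ 1)
    (η : ℕ → ℝ)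
    (hηpos : ∀ t ∈ Finset.Icc 1 (T + 1), 0 < η t)
    (hη1 : η 1 = 1 / (2 * H))
    (hrec : ∀ t ∈ Finset.Icc 1 T,
      1 / η (t + 1) = 1 / η t + η t * ζ t / Real.log T) :
    ∀ t ∈ Finset.Icc 1 T,
      η t ≤ Real.sqrt (Real.log T) /
        Real.sqrt (2 * H ^ 2 * Real.log T + ∑ τ ∈ Finset.Icc 1 t, ζ τ) := by
  have hT1 : (1:ℝ) < (T:ℝ) := by exact_mod_cast Nat.lt_of_lt_of_le one_lt_two hT
  set L := Real.log T with hLdef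
  have hL : 0 < L := Real.log_pos hT1
  have hlog2 : (0.6931471803 : ℝ) < Real.log 2 := Real.log_two_gt_d9
  have hL2 : Real.log 2 ≤ L := Real.log_le_log (by norm_num) (by exact_mod_cast hT)
  have hH0 : 0 < H := lt_of_lt_of_le one_pos hH
  have key : ∀ n, n ≤ T →
      2 * H ^ 2 * L + 1 + 2 * ∑ τ ∈ Finset.Icc 1 n, ζ τ ≤ L * (1 / η (n+1)) ^ 2 := by
    intro n
    induction n with
    | zero =>
      intro _
      rw [show Finset.Icc 1 0 = (∅ : Finset ℕ) by rfl]
      rw [hη1, one_div_one_div]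
      simp only [Finset.sum_empty, mul_zero, add_zero]
      nlinarith [mul_pos hH0 hH0]
    | succ n ih =>
      intro hn1
      have hn : n ≤ T := Nat.le_of_succ_le hn1
      have ih' := ih hn
      have hmem : n + 1 ∈ Finset.Icc 1 T := Finset.mem_Icc.mpr ⟨Nat.succ_le_succ (Nat.zero_le n), hn1⟩
      have hηt : 0 < η (n + 1) :=
        hηpos _ (Finset.mem_Icc.mpr ⟨Nat.succ_le_succ (Nat.zero_le n), by omega⟩)
      have hζt := hζ _ hmem
      have hrect := hrec _ hmem
      rw [hrect]
      have hsum : ∑ τ ∈ Finset.Icc 1 (n+1), ζ τ = (∑ τ ∈ Finset.Icc 1 n, ζ τ) + ζ (n+1) :=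
        Finset.sum_Icc_succ_top (Nat.succ_le_succ (Nat.zero_le n)) ζ
      rw [hsum]
      have hac : L * ((1 / η (n+1)) * (η (n+1) * ζ (n+1) / L)) = ζ (n+1) := by
        field_simp
      have expand : L * (1 / η (n+1) + η (n+1) * ζ (n+1) / L) ^ 2 =
          L * (1 / η (n+1)) ^ 2 + 2 * (L * ((1 / η (n+1)) * (η (n+1) * ζ (n+1) / L)))
            + L * (η (n+1) * ζ (n+1) / L) ^ 2 := by ring
      rw [expand, hac]
      have hnn : 0 ≤ L * (η (n+1) * ζ (n+1) / L) ^ 2 :=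
        mul_nonneg hL.le (sq_nonneg _)
      linarith
  intro t ht
  obtain ⟨h1, h2⟩ := Finset.mem_Icc.mp ht
  obtain ⟨n, rfl⟩ : ∃ n, t = n + 1 := ⟨t - 1, (Nat.succ_pred_eq_of_pos h1).symm⟩
  have hkey := key n (by omega)
  have hηt : 0 < η (n + 1) :=
    hηpos _ (Finset.mem_Icc.mpr ⟨h1, by omega⟩)
  have hζt := hζ _ ht
  have hsum : ∑ τ ∈ Finset.Icc 1 (n+1), ζ τ = (∑ τ ∈ Finset.Icc 1 n, ζ τ) + ζ (n+1) :=
    Finset.sum_Icc_succ_top (Nat.succ_le_succ (Nat.zero_le n)) ζ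
  have hSnn : 0 ≤ ∑ τ ∈ Finset.Icc 1 n, ζ τ := by
    apply Finset.sum_nonneg
    intro τ hτ
    obtain ⟨ha, hb⟩ := Finset.mem_Icc.mp hτ
    exact (hζ τ (Finset.mem_Icc.mpr ⟨ha, by omega⟩)).1
  set D := 2 * H ^ 2 * L + ∑ τ ∈ Finset.Icc 1 (n+1), ζ τ with hD
  have hDpos : 0 < D := by
    rw [hD, hsum]
    nlinarith [mul_pos hH0 hH0, hζt.1]
  have hDle : D ≤ L * (1 / η (n+1)) ^ 2 := by
    rw [hD, hsum]
    linarith [hkey, hζt.2, hSnn]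
  have hsq : η (n+1) ^ 2 ≤ L / D := by
    rw [le_div_iff₀ hDpos]
    calc η (n+1) ^ 2 * D ≤ η (n+1) ^ 2 * (L * (1 / η (n+1)) ^ 2) := by
          exact mul_le_mul_of_nonneg_left hDle (sq_nonneg _)
      _ = L := by field_simp
  calc η (n+1) = Real.sqrt (η (n+1) ^ 2) := (Real.sqrt_sq hηt.le).symm
    _ ≤ Real.sqrt (L / D) := Real.sqrt_le_sqrt hsq
    _ = Real.sqrt L / Real.sqrt D := Real.sqrt_div hL.le D
end

section
/- Let T ≥ 2 be an integer, and let H ≥ 1 and S ≥ 1 be real numbers. Let R ⊆ {1,…,T} be a set of episodes (the 'real' episodes). For t = 1,…,T let ζ_t ≥ 0 and q_t > 0 be real numbers, and define positive reals η_1, η_2, …, η_{T+1} recursively from an arbitrary η_1 > 0 by: 1/η_{t+1} = 1/η_t + η_t·ζ_t/(q_t²·ln T) if t ∈ R, and 1/η_{t+1} = (1/η_t)·(1 + 1/(324·H·ln T)) if t ∉ R. Assume that for every t ∈ R one has ζ_t ≤ H² and η_t/q_t ≤ 1/(18·√(H³·S)). Then for every t ∈ {1,…,T}: η_t · √( Σ_{τ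 ∈ R, τ ≤ t} ζ_τ/q_τ² ) ≤ 2·√(ln T). -/
open Finset Real

/-! The potential `(1 / η t)²` increases by at least `2 ζ t / (q t² ln T)` at every real episode
(expand the square of the update) and never decreases at a virtual one, so
`η t² · ∑_{τ ∈ R, τ < t} ζ τ / q τ² ≤ ln T / 2`. The step-size condition bounds the term of
episode `t` itself by `η t² ζ t / q t² ≤ 1/324`, and `ln T / 2 + 1/324 ≤ 4 ln T` as `T ≥ 2`. -/

lemma inv_sq_add_le_of_real_step {η η' a L : ℝ} (hη : η ≠ 0)
    (h : 1 / η' = 1 / η + η * a / L) : (1 / η) ^ 2 + 2 / L * a ≤ (1 / η') ^ 2 := by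
  have hexpand : (1 / η') ^ 2 = (1 / η) ^ 2 + 2 / L * a + (η * a / L) ^ 2 := by
    rw [h]; field_simp; ring
  linarith [sq_nonneg (η * a / L)]

lemma inv_sq_le_of_virtual_step {η η' c : ℝ} (hc : 0 ≤ c) (h : 1 / η' = 1 / η * (1 + c)) :
    (1 / η) ^ 2 ≤ (1 / η') ^ 2 := by
  rw [h, mul_pow]
  exact le_mul_of_one_le_right (sq_nonneg _) (one_le_pow₀ (by linarith))

lemma two_div_mul_sum_Ico_le_inv_sq_sub {η a : ℕ → ℝ} {R : Finset ℕ} {L c : ℝ} {m n : ℕ}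
    (hmn : m ≤ n) (hc : 0 ≤ c) (hη : ∀ t ∈ Ico m n, η t ≠ 0)
    (hreal : ∀ t ∈ Ico m n, t ∈ R → 1 / η (t + 1) = 1 / η t + η t * a t / L)
    (hvirtual : ∀ t ∈ Ico m n, t ∉ R → 1 / η (t + 1) = 1 / η t * (1 + c)) :
    2 / L * ∑ t ∈ Ico m n, (if t ∈ R then a t else 0) ≤ (1 / η n) ^ 2 - (1 / η m) ^ 2 := by
  rw [mul_sum, ← sum_Ico_sub (fun t => (1 / η t) ^ 2) hmn]
  refine sum_le_sum fun t ht => ?_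
  split_ifs with htR
  · linarith [inv_sq_add_le_of_real_step (hη t ht) (hreal t ht htR)]
  · linarith [inv_sq_le_of_virtual_step hc (hvirtual t ht htR)]

lemma sq_mul_sum_Ico_le_half {η a : ℕ → ℝ} {R : Finset ℕ} {L c : ℝ} {m n : ℕ}
    (hmn : m ≤ n) (hL : 0 < L) (hc : 0 ≤ c) (hη : ∀ t ∈ Icc m n, η t ≠ 0)
    (hreal : ∀ t ∈ Ico m n, t ∈ R → 1 / η (t + 1) = 1 / η t + η t * a t / L)
    (hvirtual : ∀ t ∈ Ico m n, t ∉ R → 1 / η (t + 1) = 1 / η t * (1 + c)) :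
    η n ^ 2 * ∑ t ∈ Ico m n, (if t ∈ R then a t else 0) ≤ L / 2 := by
  have hpot := two_div_mul_sum_Ico_le_inv_sq_sub hmn hc
    (fun t ht => hη t (Ico_subset_Icc_self ht)) hreal hvirtual
  have hηn : η n ^ 2 * (1 / η n) ^ 2 = 1 := by
    field_simp [hη n (right_mem_Icc.2 hmn)]
  calc η n ^ 2 * ∑ t ∈ Ico m n, (if t ∈ R then a t else 0)
      = L / 2 * (η n ^ 2 * (2 / L * ∑ t ∈ Ico m n, (if t ∈ R then a t else 0))) := by
        field_simp
    _ ≤ L / 2 * (η n ^ 2 * (1 / η n) ^ 2) := by gcongr; linarith [sq_nonneg (1 / η m)]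
    _ = L / 2 := by rw [hηn, mul_one]

lemma sum_filter_le_eq_sum_Ico_add {R : Finset ℕ} {t : ℕ} (f : ℕ → ℝ) (hR : ∀ τ ∈ R, 1 ≤ τ)
    (ht : 1 ≤ t) :
    ∑ τ ∈ R.filter (· ≤ t), f τ =
      ∑ τ ∈ Ico 1 t, (if τ ∈ R then f τ else 0) + (if t ∈ R then f t else 0) := by
  rw [← sum_Ico_succ_top ht (fun τ => if τ ∈ R then f τ else 0), ← sum_filter]
  congr 1
  ext τ
  simp only [mem_filter, mem_Ico]
  constructor
  · rintro ⟨hτR, hτt⟩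
    exact ⟨⟨hR τ hτR, by omega⟩, hτR⟩
  · rintro ⟨⟨-, hτt⟩, hτR⟩
    exact ⟨hτR, by omega⟩

lemma sq_mul_div_sq_le {H S η q ζ : ℝ} (hH : 1 ≤ H) (hS : 1 ≤ S) (hη : 0 ≤ η) (hq : 0 < q)
    (hζ : ζ ≤ H ^ 2) (hηq : η / q ≤ 1 / (18 * √(H ^ 3 * S))) :
    η ^ 2 * (ζ / q ^ 2) ≤ 1 / 324 := by
  have hHS : 0 < H ^ 3 * S := by positivity
  have hsq : (η / q) ^ 2 ≤ 1 / (324 * (H ^ 3 * S)) := by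
    calc (η / q) ^ 2 ≤ (1 / (18 * √(H ^ 3 * S))) ^ 2 := by gcongr
      _ = 1 / (324 * (H ^ 3 * S)) := by
        norm_num [div_pow, mul_pow, sq_sqrt hHS.le]
  calc η ^ 2 * (ζ / q ^ 2) = (η / q) ^ 2 * ζ := by field_simp
    _ ≤ (η / q) ^ 2 * H ^ 2 := by gcongr
    _ ≤ 1 / (324 * (H ^ 3 * S)) * H ^ 2 := by gcongr
    _ = 1 / 324 * (1 / (H * S)) := by field_simp
    _ ≤ 1 / 324 :=
        mul_le_of_le_one_right (by norm_num)
          (div_le_one_of_le₀ (one_le_mul_of_one_le_of_one_le hH hS) (by positivity))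

lemma mul_sqrt_le_two_mul_sqrt {η Z L : ℝ} (hη : 0 ≤ η) (h : η ^ 2 * Z ≤ 4 * L) :
    η * √Z ≤ 2 * √L := by
  calc η * √Z = √(η ^ 2 * Z) := by rw [sqrt_mul (sq_nonneg η), sqrt_sq hη]
    _ ≤ √(2 ^ 2 * L) := sqrt_le_sqrt (by linarith)
    _ = 2 * √L := by rw [sqrt_mul (by norm_num), sqrt_sq (by norm_num)]

theorem learning_rate_bound_policy_general
    (T : ℕ) (hT : 2 ≤ T) (H S : ℝ) (hH : 1 ≤ H) (hS : 1 ≤ S)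
    (R : Finset ℕ) (hR : R ⊆ Finset.Icc 1 T)
    (ζ q : ℕ → ℝ)
    (hq : ∀ t ∈ Finset.Icc 1 T, 0 < q t)
    (η : ℕ → ℝ)
    (hηpos : ∀ t ∈ Finset.Icc 1 (T + 1), 0 < η t)
    (hrecReal : ∀ t ∈ Finset.Icc 1 T, t ∈ R →
      1 / η (t + 1) = 1 / η t + η t * ζ t / (q t ^ 2 * Real.log T))
    (hrecVirtual : ∀ t ∈ Finset.Icc 1 T, t ∉ R →
      1 / η (t + 1) = (1 / η t) * (1 + 1 / (324 * H * Real.log T)))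
    (hζH : ∀ t ∈ R, ζ t ≤ H ^ 2)
    (hηq : ∀ t ∈ R, η t / q t ≤ 1 / (18 * Real.sqrt (H ^ 3 * S))) :
    ∀ t ∈ Finset.Icc 1 T,
      η t * Real.sqrt (∑ τ ∈ R.filter (fun τ => τ ≤ t), ζ τ / q τ ^ 2) ≤
        2 * Real.sqrt (Real.log T) := by
  intro t ht
  obtain ⟨ht1, htT⟩ := mem_Icc.1 ht
  have hlog : log 2 ≤ log T := log_le_log (by norm_num) (by exact_mod_cast hT)
  have hlog_pos : 0 < log T := by linarith [log_two_gt_d9]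
  have hsub : Icc 1 t ⊆ Icc 1 (T + 1) := Icc_subset_Icc_right (by omega)
  have hIco : Ico 1 t ⊆ Icc 1 T := Ico_subset_Icc_self.trans (Icc_subset_Icc_right htT)
  have hηt : 0 ≤ η t := (hηpos t (hsub (right_mem_Icc.2 ht1))).le
  have hpast := sq_mul_sum_Ico_le_half (a := fun τ => ζ τ / q τ ^ 2) (R := R) ht1 hlog_pos
    (by positivity : 0 ≤ 1 / (324 * H * log T)) (fun τ hτ => (hηpos τ (hsub hτ)).ne')
    (fun τ hτ hτR => by rw [hrecReal τ (hIco hτ) hτR]; ring)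
    (fun τ hτ hτR => hrecVirtual τ (hIco hτ) hτR)
  have hnow : η t ^ 2 * (if t ∈ R then ζ t / q t ^ 2 else 0) ≤ 1 / 324 := by
    split_ifs with htR
    · exact sq_mul_div_sq_le hH hS hηt (hq t ht) (hζH t htR) (hηq t htR)
    · norm_num
  refine mul_sqrt_le_two_mul_sqrt hηt ?_
  rw [sum_filter_le_eq_sum_Ico_add _ (fun τ hτ => (mem_Icc.1 (hR hτ)).1) ht1, mul_add]
  linarith [log_two_gt_d9]

/-- Learning-rate bound for the adaptive log-barrier learning rates in the
policy-optimization algorithm: real episodes `t ∈ R` update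
`1/η (t+1) = 1/η t + η t · ζ t / (q t² · ln T)`, virtual episodes shrink the learning
rate by the factor `1 + 1/(324·H·ln T)`; under `ζ t ≤ H²` and
`η t / q t ≤ 1/(18·√(H³·S))` on real episodes, for every `t ∈ {1,…,T}`,
`η t · √(∑_{τ ∈ R, τ ≤ t} ζ τ / q τ²) ≤ 2·√(ln T)`. -/
theorem learning_rate_bound_policy
    (T : ℕ) (hT : 2 ≤ T) (H S : ℝ) (hH : 1 ≤ H) (hS : 1 ≤ S)
    (R : Finset ℕ) (hR : R ⊆ Finset.Icc 1 T)
    (ζ q : ℕ → ℝ)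
    (hζ : ∀ t ∈ Finset.Icc 1 T, 0 ≤ ζ t)
    (hq : ∀ t ∈ Finset.Icc 1 T, 0 < q t)
    (η : ℕ → ℝ)
    (hηpos : ∀ t ∈ Finset.Icc 1 (T + 1), 0 < η t)
    (hrecReal : ∀ t ∈ Finset.Icc 1 T, t ∈ R →
      1 / η (t + 1) = 1 / η t + η t * ζ t / (q t ^ 2 * Real.log T))
    (hrecVirtual : ∀ t ∈ Finset.Icc 1 T, t ∉ R →
      1 / η (t + 1) = (1 / η t) * (1 + 1 / (324 * H * Real.log T)))
    (hζH : ∀ t ∈ R, ζ t ≤ H ^ 2)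
    (hηq : ∀ t ∈ R, η t / q t ≤ 1 / (18 * Real.sqrt (H ^ 3 * S))) :
    ∀ t ∈ Finset.Icc 1 T,
      η t * Real.sqrt (∑ τ ∈ R.filter (fun τ => τ ≤ t), ζ τ / q τ ^ 2) ≤
        2 * Real.sqrt (Real.log T) :=
  learning_rate_bound_policy_general T hT H S hH hS R hR ζ q hq η hηpos hrecReal hrecVirtual hζH hηq
end

section
/- Let ι be a finite type, T ≥ 1 an integer, and ξ ∈ (0, 1/2) a real number. For t = 1,…,T let ℓ_t : ι → [0,1], m*_t : ι → [0,1], and I_t : ι → {0,1}. Define m_t : ι → ℝ recursively by m_1(i) = 1/2 for all i, and m_{t+1}(i) = (1 − ξ)·m_t(i) + ξ·ℓ_t(i) if I_t(i) = 1, while m_{t+1}(i) = m_t(i) if I_t(i) = 0. Then: Σ_{t=1}^{T} Σ_{i∈ι} I_t(i)·(ℓ_t(i) − m_t(i))² ≤ (1/(1 − 2ξ))·Σ_{t=1}^{T} Σ_{i∈ι} I_t(i)·(ℓ_t(i) − m*_t(i))² + (1/(ξ·(1 − 2ξ)))·( |ι|/4 + 2·Σ_{t=1}^{T−1} Σ_{i∈ι}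 |m*_{t+1}(i) − m*_t(i)| ). -/
/-- One step of the gradient-descent regret analysis, pointwise. -/
private lemma gd_step_aux (ξ ℓt m0 u It m' : ℝ) (hξ0 : 0 < ξ) (hξ1 : ξ < 1/2)
    (hIt : It = 0 ∨ It = 1)
    (hm' : m' = if It = 1 then (1-ξ)*m0 + ξ*ℓt else m0) :
    ξ*(1-ξ)*(It*(ℓt - m0)^2) + (m' - u)^2 ≤ ξ*(It*(ℓt - u)^2) + (m0 - u)^2 := by
  rcases hIt with h | h
  · subst h; norm_num at hm'; rw [hm']; nlinarith [mul_nonneg hξ0.le (sq_nonneg (ℓt - m0))]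
  · subst h; norm_num at hm'; rw [hm']
    nlinarith [mul_nonneg hξ0.le (sq_nonneg (m0 - u))]

/-- Comparator-shift bound, pointwise. -/
private lemma gd_shift_aux (a b c : ℝ) (ha0 : 0 ≤ a) (ha1 : a ≤ 1)
    (hb0 : 0 ≤ b) (hb1 : b ≤ 1) (hc0 : 0 ≤ c) (hc1 : c ≤ 1) :
    (a - c)^2 ≤ (a - b)^2 + 2*|c - b| := by
  rcases abs_cases (c - b) with ⟨h, h'⟩ | ⟨h, h'⟩ <;> rw [h]
  · nlinarith [mul_nonneg (by linarith : (0:ℝ) ≤ c - b)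
      (by linarith : (0:ℝ) ≤ 2 - (b + c - 2*a))]
  · nlinarith [mul_nonneg (by linarith : (0:ℝ) ≤ b - c)
      (by linarith : (0:ℝ) ≤ 2 - (2*a - b - c))]

/-- Path-length bound for the gradient-descent loss prediction with step size `ξ`:
`m 1 = 1/2`, and on visited coordinates `m (t+1) = (1-ξ)·m t + ξ·ℓ t`. For any comparator
sequence `mstar` with values in `[0,1]`, the squared prediction error on visited
coordinates is bounded in terms of the comparator's error and its path length. -/
theorem gd_predictor_path_length
    {ι : Type*} [Fintype ι] (T : ℕ) (hT : 1 ≤ T)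
    (ξ : ℝ) (hξ : ξ ∈ Set.Ioo (0 : ℝ) (1 / 2))
    (ℓ mstar : ℕ → ι → ℝ) (I : ℕ → ι → ℝ)
    (hℓ : ∀ t ∈ Finset.Icc 1 T, ∀ i, ℓ t i ∈ Set.Icc (0 : ℝ) 1)
    (hstar : ∀ t ∈ Finset.Icc 1 T, ∀ i, mstar t i ∈ Set.Icc (0 : ℝ) 1)
    (hI : ∀ t ∈ Finset.Icc 1 T, ∀ i, I t i = 0 ∨ I t i = 1)
    (m : ℕ → ι → ℝ)
    (hm1 : ∀ i, m 1 i = 1 / 2)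
    (hmrec : ∀ t ∈ Finset.Icc 1 T, ∀ i,
      m (t + 1) i = if I t i = 1 then (1 - ξ) * m t i + ξ * ℓ t i else m t i) :
    ∑ t ∈ Finset.Icc 1 T, ∑ i, I t i * (ℓ t i - m t i) ^ 2 ≤
      (1 / (1 - 2 * ξ)) * ∑ t ∈ Finset.Icc 1 T, ∑ i, I t i * (ℓ t i - mstar t i) ^ 2
      + (1 / (ξ * (1 - 2 * ξ))) *
          ((Fintype.card ι : ℝ) / 4
            + 2 * ∑ t ∈ Finset.Icc 1 (T - 1), ∑ i, |mstar (t + 1) i - mstar t i|) := by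
  obtain ⟨hξ0, hξ1⟩ := hξ
  -- bounds on m
  have mbd : ∀ t, t ≤ T → ∀ i, 0 ≤ m (t+1) i ∧ m (t+1) i ≤ 1 := by
    intro t
    induction t with
    | zero => intro _ i; rw [hm1]; norm_num
    | succ n ih =>
      intro h i
      have hn : n + 1 ∈ Finset.Icc 1 T := by simp; omega
      have hmi := ih (by omega) i
      have hl := hℓ _ hn i
      rw [hmrec _ hn i]
      split
      · constructor <;> nlinarith [hl.1, hl.2, hmi.1, hmi.2]
      · exact hmi
  -- the key inductive inequality
  have key : ∀ n, 1 ≤ n → n ≤ T →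
      ξ*(1-ξ) * ∑ t ∈ Finset.Icc 1 n, ∑ i, I t i * (ℓ t i - m t i) ^ 2
        + ∑ i, (m (n+1) i - mstar n i)^2 ≤
      ξ * ∑ t ∈ Finset.Icc 1 n, ∑ i, I t i * (ℓ t i - mstar t i) ^ 2
        + (Fintype.card ι : ℝ) / 4
        + 2 * ∑ t ∈ Finset.Icc 1 (n - 1), ∑ i, |mstar (t + 1) i - mstar t i| := by
    intro n hn1
    induction n, hn1 using Nat.le_induction with
    | base =>
      intro h1
      have h1' : (1 : ℕ) ∈ Finset.Icc 1 T := by simp; omega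
      have per : ∀ i ∈ (Finset.univ : Finset ι),
          ξ*(1-ξ)*(I 1 i*(ℓ 1 i - m 1 i)^2) + (m 2 i - mstar 1 i)^2
            ≤ ξ*(I 1 i*(ℓ 1 i - mstar 1 i)^2) + 1/4 := by
        intro i _
        have hs := gd_step_aux ξ (ℓ 1 i) (m 1 i) (mstar 1 i) (I 1 i) (m 2 i)
          hξ0 hξ1 (hI 1 h1' i) (hmrec 1 h1' i)
        have hst := hstar 1 h1' i
        have : (m 1 i - mstar 1 i)^2 ≤ 1/4 := by
          rw [hm1]; nlinarith [hst.1, hst.2]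
        linarith
      have hsum := Finset.sum_le_sum per
      rw [Finset.sum_add_distrib, Finset.sum_add_distrib, ← Finset.mul_sum,
        ← Finset.mul_sum, Finset.sum_const, Finset.card_univ] at hsum
      simp only [Finset.Icc_self, Finset.sum_singleton, Nat.sub_self,
        show Finset.Icc 1 0 = ∅ from rfl, Finset.sum_empty]
      simp only [nsmul_eq_mul] at hsum
      linarith
    | succ n hn ih =>
      intro hsucc
      obtain ⟨k, rfl⟩ : ∃ k, n = k + 1 := ⟨n - 1, by omega⟩
      have hnT : k + 1 ≤ T := by omega
      have A := ih hnT
      simp only [Nat.add_sub_cancel] at A ⊢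
      have hmem : k + 1 ∈ Finset.Icc 1 T := by simp; omega
      have hmem' : k + 1 + 1 ∈ Finset.Icc 1 T := by simp; omega
      -- comparator shift
      have B : ∑ i, (m (k+1+1) i - mstar (k+1+1) i)^2 ≤
          ∑ i, (m (k+1+1) i - mstar (k+1) i)^2
            + 2 * ∑ i, |mstar (k+1+1) i - mstar (k+1) i| := by
        have per : ∀ i ∈ (Finset.univ : Finset ι),
            (m (k+1+1) i - mstar (k+1+1) i)^2 ≤
              (m (k+1+1) i - mstar (k+1) i)^2 + 2*|mstar (k+1+1) i - mstar (k+1) i| := by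
          intro i _
          have hb := mbd (k+1) hnT i
          have h1 := hstar (k+1) hmem i
          have h2 := hstar (k+1+1) hmem' i
          exact gd_shift_aux _ _ _ hb.1 hb.2 h1.1 h1.2 h2.1 h2.2
        have := Finset.sum_le_sum per
        rwa [Finset.sum_add_distrib, ← Finset.mul_sum] at this
      -- step at time k+1+1
      have C : ξ*(1-ξ) * ∑ i, I (k+1+1) i * (ℓ (k+1+1) i - m (k+1+1) i)^2
            + ∑ i, (m (k+1+1+1) i - mstar (k+1+1) i)^2 ≤
          ξ * ∑ i, I (k+1+1) i * (ℓ (k+1+1) i - mstar (k+1+1) i)^2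
            + ∑ i, (m (k+1+1) i - mstar (k+1+1) i)^2 := by
        have per : ∀ i ∈ (Finset.univ : Finset ι),
            ξ*(1-ξ)*(I (k+1+1) i * (ℓ (k+1+1) i - m (k+1+1) i)^2)
              + (m (k+1+1+1) i - mstar (k+1+1) i)^2 ≤
            ξ*(I (k+1+1) i * (ℓ (k+1+1) i - mstar (k+1+1) i)^2)
              + (m (k+1+1) i - mstar (k+1+1) i)^2 := by
          intro i _
          exact gd_step_aux ξ (ℓ (k+1+1) i) (m (k+1+1) i) (mstar (k+1+1) i)
            (I (k+1+1) i) (m (k+1+1+1) i) hξ0 hξ1 (hI _ hmem' i) (hmrec _ hmem' i)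
        have := Finset.sum_le_sum per
        rwa [Finset.sum_add_distrib, Finset.sum_add_distrib, ← Finset.mul_sum,
          ← Finset.mul_sum] at this
      have e1 : ∑ t ∈ Finset.Icc 1 (k+1+1), ∑ i, I t i * (ℓ t i - m t i)^2
          = (∑ t ∈ Finset.Icc 1 (k+1), ∑ i, I t i * (ℓ t i - m t i)^2)
            + ∑ i, I (k+1+1) i * (ℓ (k+1+1) i - m (k+1+1) i)^2 :=
        Finset.sum_Icc_succ_top (by omega) _
      have e2 : ∑ t ∈ Finset.Icc 1 (k+1+1), ∑ i, I t i * (ℓ t i - mstar t i)^2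
          = (∑ t ∈ Finset.Icc 1 (k+1), ∑ i, I t i * (ℓ t i - mstar t i)^2)
            + ∑ i, I (k+1+1) i * (ℓ (k+1+1) i - mstar (k+1+1) i)^2 :=
        Finset.sum_Icc_succ_top (by omega) _
      have e3 : ∑ t ∈ Finset.Icc 1 (k+1), ∑ i, |mstar (t+1) i - mstar t i|
          = (∑ t ∈ Finset.Icc 1 k, ∑ i, |mstar (t+1) i - mstar t i|)
            + ∑ i, |mstar (k+1+1) i - mstar (k+1) i| :=
        Finset.sum_Icc_succ_top (by omega) _
      rw [e1, e2, e3, mul_add, mul_add, mul_add]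
      linarith
  have hkey := key T hT le_rfl
  set A := ∑ t ∈ Finset.Icc 1 T, ∑ i, I t i * (ℓ t i - m t i) ^ 2 with hA
  set C := ∑ t ∈ Finset.Icc 1 T, ∑ i, I t i * (ℓ t i - mstar t i) ^ 2 with hC
  set P := ∑ t ∈ Finset.Icc 1 (T - 1), ∑ i, |mstar (t + 1) i - mstar t i| with hP
  have hAnn : 0 ≤ A := by
    apply Finset.sum_nonneg; intro t ht
    apply Finset.sum_nonneg; intro i _
    rcases hI t ht i with h | h <;> rw [h] <;> positivity
  have hlast : 0 ≤ ∑ i, (m (T+1) i - mstar T i)^2 :=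
    Finset.sum_nonneg fun i _ => sq_nonneg _
  have h1 : ξ*(1-ξ)*A ≤ ξ*C + ((Fintype.card ι : ℝ)/4 + 2*P) := by linarith
  have hu : 0 < 1 - 2*ξ := by linarith
  have hξu : 0 < ξ*(1-2*ξ) := by positivity
  have key2 : ξ*(1-2*ξ)*A ≤ ξ*C + ((Fintype.card ι : ℝ)/4 + 2*P) := by
    nlinarith [mul_nonneg (mul_nonneg hξ0.le hξ0.le) hAnn]
  have htarget : (1/(1-2*ξ))*C + (1/(ξ*(1-2*ξ)))*((Fintype.card ι : ℝ)/4 + 2*P)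
      = (ξ*C + ((Fintype.card ι : ℝ)/4 + 2*P))/(ξ*(1-2*ξ)) := by
    field_simp
  rw [htarget, le_div_iff₀ hξu]
  nlinarith [key2]
end

section
/- Let T ≥ 1 be an integer, let ℓ_1,…,ℓ_T ∈ [0,1] be real numbers, and let m* ∈ [0,1]. Define m_t = (Σ_{τ=1}^{t−1} ℓ_τ) / max(1, t−1) for t = 1,…,T. Then: Σ_{t=1}^{T} (ℓ_t − m_t)² ≤ Σ_{t=1}^{T} (ℓ_t − m*)² + ln(T) + 1. -/
/-!
With `V t = ∑_{τ ≤ t} (ℓ τ - m_{t+1})²` the loss of the best constant in hindsight, one has the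
exact identity `V t - V (t - 1) = (1 - 1/t) (ℓ t - m t)²`. Summing, the loss of the empirical
mean is `V T + ∑ (ℓ t - m t)² / t`; the first term is at most the loss of any constant, and
the second at most the harmonic number `H_T ≤ ln T + 1` because all values lie in `[0, 1]`.
-/

open Finset

theorem Finset.sum_Icc_one_sub_pred {M : Type*} [AddCommGroup M] (f : ℕ → M) (n : ℕ) :
    ∑ t ∈ Icc 1 n, (f t - f (t - 1)) = f n - f 0 := by
  induction n with
  | zero => simp
  | succ n ih => rw [sum_Icc_succ_top (by omega), ih, Nat.add_sub_cancel]; abel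

theorem sum_sq_sub_sq_sum_div_card_le {ι : Type*} (s : Finset ι) (x : ι → ℝ) (c : ℝ) :
    ∑ i ∈ s, x i ^ 2 - (∑ i ∈ s, x i) ^ 2 / #s ≤ ∑ i ∈ s, (x i - c) ^ 2 := by
  rcases s.eq_empty_or_nonempty with rfl | hs
  · simp
  have hcard : (0 : ℝ) < #s := by exact_mod_cast hs.card_pos
  have expand : ∑ i ∈ s, (x i - c) ^ 2 =
      ∑ i ∈ s, x i ^ 2 - 2 * c * ∑ i ∈ s, x i + #s * c ^ 2 := by
    simp only [sub_sq, sum_add_distrib, sum_sub_distrib, sum_const, nsmul_eq_mul, ← sum_mul,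
      ← mul_sum]
    ring
  have hsq : 0 ≤ (∑ i ∈ s, x i - #s * c) ^ 2 / #s := by positivity
  rw [sub_sq, add_div, sub_div] at hsq
  rw [expand]
  field_simp at hsq ⊢
  nlinarith

noncomputable def empiricalMean (ℓ : ℕ → ℝ) (n : ℕ) : ℝ :=
  (∑ τ ∈ Icc 1 n, ℓ τ) / ((max 1 n : ℕ) : ℝ)

/-- The loss `∑ τ ≤ n, (ℓ τ - c)²` of the best constant `c` in hindsight, the mean. -/
noncomputable def sumSqDeviation (ℓ : ℕ → ℝ) (n : ℕ) : ℝ :=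
  ∑ τ ∈ Icc 1 n, ℓ τ ^ 2 - (∑ τ ∈ Icc 1 n, ℓ τ) ^ 2 / n

theorem sumSqDeviation_le (ℓ : ℕ → ℝ) (n : ℕ) (c : ℝ) :
    sumSqDeviation ℓ n ≤ ∑ τ ∈ Icc 1 n, (ℓ τ - c) ^ 2 := by
  simpa [sumSqDeviation] using sum_sq_sub_sq_sum_div_card_le (Icc 1 n) ℓ c

theorem empiricalMean_mem_Icc {ℓ : ℕ → ℝ} {n : ℕ} (hℓ : ∀ t ∈ Icc 1 n, ℓ t ∈ Set.Icc (0 : ℝ) 1) :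
    empiricalMean ℓ n ∈ Set.Icc (0 : ℝ) 1 := by
  have hpos : (0 : ℝ) < ((max 1 n : ℕ) : ℝ) := by positivity
  refine ⟨div_nonneg (sum_nonneg fun t ht ↦ (hℓ t ht).1) hpos.le, (div_le_one hpos).2 ?_⟩
  calc ∑ τ ∈ Icc 1 n, ℓ τ ≤ ∑ τ ∈ Icc 1 n, (1 : ℝ) := sum_le_sum fun t ht ↦ (hℓ t ht).2
    _ = n := by simp
    _ ≤ ((max 1 n : ℕ) : ℝ) := by exact_mod_cast le_max_right 1 n

theorem sumSqDeviation_succ_sub (ℓ : ℕ → ℝ) (n : ℕ) :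
    sumSqDeviation ℓ (n + 1) - sumSqDeviation ℓ n =
      (ℓ (n + 1) - empiricalMean ℓ n) ^ 2 * (1 - 1 / (n + 1 : ℕ)) := by
  rcases Nat.eq_zero_or_pos n with rfl | hn
  · simp [sumSqDeviation, empiricalMean]
  have hn' : (0 : ℝ) < n := by exact_mod_cast hn
  simp only [sumSqDeviation, empiricalMean, sum_Icc_succ_top (Nat.le_add_left 1 n),
    max_eq_right (show 1 ≤ n from hn)]
  push_cast
  field_simp
  ring

theorem empirical_mean_predictor_scalar_general
    (T : ℕ)
    (ℓ : ℕ → ℝ) (hℓ : ∀ t ∈ Finset.Icc 1 T, ℓ t ∈ Set.Icc (0 : ℝ) 1)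
    (mstar : ℝ)
    (m : ℕ → ℝ)
    (hm : ∀ t ∈ Finset.Icc 1 T,
      m t = (∑ τ ∈ Finset.Icc 1 (t - 1), ℓ τ) / ((max 1 (t - 1) : ℕ) : ℝ)) :
    ∑ t ∈ Finset.Icc 1 T, (ℓ t - m t) ^ 2 ≤
      ∑ t ∈ Finset.Icc 1 T, (ℓ t - mstar) ^ 2 + Real.log T + 1 := by
  have hmean : ∀ t ∈ Icc 1 T, m t = empiricalMean ℓ (t - 1) := hm
  have hstep : ∀ t ∈ Icc 1 T, (ℓ t - m t) ^ 2 =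
      (sumSqDeviation ℓ t - sumSqDeviation ℓ (t - 1)) + (ℓ t - m t) ^ 2 / t := by
    intro t ht
    obtain ⟨n, rfl⟩ : ∃ n, t = n + 1 := ⟨t - 1, by grind⟩
    rw [hmean _ ht, Nat.add_sub_cancel, sumSqDeviation_succ_sub]
    ring
  have hcorr : ∀ t ∈ Icc 1 T, (ℓ t - m t) ^ 2 / t ≤ (t : ℝ)⁻¹ := by
    intro t ht
    have hℓt := hℓ t ht
    have hmt : m t ∈ Set.Icc (0 : ℝ) 1 := hmean t ht ▸ empiricalMean_mem_Icc fun τ hτ ↦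
      hℓ τ (Icc_subset_Icc le_rfl (by grind) hτ)
    rw [div_eq_mul_inv]
    refine mul_le_of_le_one_left (by positivity) ?_
    nlinarith [hℓt.1, hℓt.2, hmt.1, hmt.2]
  calc ∑ t ∈ Icc 1 T, (ℓ t - m t) ^ 2
      = sumSqDeviation ℓ T + ∑ t ∈ Icc 1 T, (ℓ t - m t) ^ 2 / t := by
        rw [sum_congr rfl hstep, sum_add_distrib, sum_Icc_one_sub_pred]
        simp [sumSqDeviation]
    _ ≤ ∑ t ∈ Icc 1 T, (ℓ t - mstar) ^ 2 + harmonic T := by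
        gcongr
        · exact sumSqDeviation_le ℓ T mstar
        · rw [harmonic_eq_sum_Icc]
          push_cast
          exact sum_le_sum hcorr
    _ ≤ ∑ t ∈ Icc 1 T, (ℓ t - mstar) ^ 2 + Real.log T + 1 := by
        linarith [harmonic_le_one_add_log T]

/-- Empirical-mean predictor bound (scalar case): with
`m t = (∑_{τ=1}^{t-1} ℓ τ) / max 1 (t-1)`, the squared prediction error is within
`ln T + 1` of that of any constant predictor `mstar ∈ [0,1]`. -/
theorem empirical_mean_predictor_scalar
    (T : ℕ) (hT : 1 ≤ T)
    (ℓ : ℕ → ℝ) (hℓ : ∀ t ∈ Finset.Icc 1 T, ℓ t ∈ Set.Icc (0 : ℝ) 1)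
    (mstar : ℝ) (hstar : mstar ∈ Set.Icc (0 : ℝ) 1)
    (m : ℕ → ℝ)
    (hm : ∀ t ∈ Finset.Icc 1 T,
      m t = (∑ τ ∈ Finset.Icc 1 (t - 1), ℓ τ) / ((max 1 (t - 1) : ℕ) : ℝ)) :
    ∑ t ∈ Finset.Icc 1 T, (ℓ t - m t) ^ 2 ≤
      ∑ t ∈ Finset.Icc 1 T, (ℓ t - mstar) ^ 2 + Real.log T + 1 :=
  empirical_mean_predictor_scalar_general T ℓ hℓ mstar m hm
end

section
/- Let ι be a finite type and T ≥ 1 an integer. For t = 1,…,T let ℓ_t : ι → [0,1] and I_t : ι → {0,1}, let N_t(i) = Σ_{τ=1}^{t} I_τ(i), and define the empirical-mean predictor m_t(i) = (Σ_{τ=1}^{t−1} I_τ(i)·ℓ_τ(i)) / max(1, N_{t−1}(i)). Then for every m* : ι → [0,1]: Σ_{t=1}^{T} Σ_{i∈ι} I_t(i)·(ℓ_t(i) − m_t(i))² ≤ Σ_{t=1}^{T} Σ_{i∈ι} I_t(i)·(ℓ_t(i) − m*(i))² + |ι|·ln(T) + |ι|. -/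
/-!
Fix a coordinate and let `μ_t` be the mean of the losses observed there up to time `t`.
The loss `L_t` of the leader `μ_t` on the first `t` observations is the minimum over all fixed
predictions (bias–variance decomposition), and Welford's update gives, on a visit with
`n = N_t`, the exact increment `L_t - L_{t-1} = (1 - 1/n) (ℓ_t - μ_{t-1})²`. Summing, the regret
against any fixed prediction is at most `∑ (ℓ_t - μ_{t-1})² / n ≤ ∑_{n ≤ T} 1/n ≤ 1 + ln T`.
-/

open Finset

theorem Finset.sum_mul_sub_sq_eq_of_sum_mul_eq {α R : Type*} [CommRing R] (s : Finset α)
    (w y : α → R) {μ : R} (hμ : ∑ i ∈ s, w i * y i = (∑ i ∈ s, w i) * μ) (c : R) :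
    ∑ i ∈ s, w i * (y i - c) ^ 2 = ∑ i ∈ s, w i * (y i - μ) ^ 2 + (∑ i ∈ s, w i) * (c - μ) ^ 2 := by
  have h : ∀ i ∈ s, w i * (y i - c) ^ 2 =
      w i * (y i - μ) ^ 2 + 2 * (μ - c) * (w i * y i) - (μ - c) * (μ + c) * w i :=
    fun _ _ => by ring
  rw [sum_congr rfl h, sum_sub_distrib, sum_add_distrib, ← mul_sum, ← mul_sum, hμ]
  ring

theorem Real.inv_add_one_le_log_add_one_sub_log {k : ℝ} (hk : 0 < k) :
    (k + 1)⁻¹ ≤ Real.log (k + 1) - Real.log k := by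
  have h := Real.one_sub_inv_le_log_of_pos (x := (k + 1) / k) (by positivity)
  rw [Real.log_div (by positivity) hk.ne', inv_div] at h
  calc (k + 1)⁻¹ = 1 - k / (k + 1) := by field_simp; ring
    _ ≤ _ := h

namespace EmpiricalMean

variable (a x : ℕ → ℝ)

noncomputable def visits (t : ℕ) : ℝ := ∑ τ ∈ Icc 1 t, a τ

noncomputable def visitSum (t : ℕ) : ℝ := ∑ τ ∈ Icc 1 t, a τ * x τ

noncomputable def mean (t : ℕ) : ℝ := visitSum a x t / max 1 (visits a t)

noncomputable def leaderLoss (t : ℕ) : ℝ := ∑ τ ∈ Icc 1 t, a τ * (x τ - mean a x t) ^ 2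

variable {a x} {t T : ℕ}

theorem visits_succ (t : ℕ) : visits a (t + 1) = visits a t + a (t + 1) :=
  sum_Icc_succ_top (Nat.le_add_left 1 t) a

theorem visitSum_succ (t : ℕ) : visitSum a x (t + 1) = visitSum a x t + a (t + 1) * x (t + 1) :=
  sum_Icc_succ_top (Nat.le_add_left 1 t) _

theorem visits_nonneg (ha : ∀ τ ∈ Icc 1 t, 0 ≤ a τ) : 0 ≤ visits a t :=
  sum_nonneg ha

theorem nonneg_of_eq_zero_or_eq_one (ha : ∀ τ ∈ Icc 1 t, a τ = 0 ∨ a τ = 1) :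
    ∀ τ ∈ Icc 1 t, 0 ≤ a τ := fun τ hτ => by
  rcases ha τ hτ with h | h <;> simp [h]

theorem visits_eq_card (ha : ∀ τ ∈ Icc 1 t, a τ = 0 ∨ a τ = 1) :
    visits a t = #{τ ∈ Icc 1 t | a τ = 1} := by
  rw [visits, natCast_card_filter]
  refine sum_congr rfl fun τ hτ => ?_
  rcases ha τ hτ with h | h <;> simp [h]

theorem visits_eq_zero_or_one_le (ha : ∀ τ ∈ Icc 1 t, a τ = 0 ∨ a τ = 1) :
    visits a t = 0 ∨ 1 ≤ visits a t := by
  rw [visits_eq_card ha]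
  rcases Nat.eq_zero_or_pos #{τ ∈ Icc 1 t | a τ = 1} with h | h
  · exact Or.inl (by simp [h])
  · exact Or.inr (by exact_mod_cast h)

theorem visits_le (ha : ∀ τ ∈ Icc 1 t, a τ = 0 ∨ a τ = 1) : visits a t ≤ t := by
  rw [visits_eq_card ha]
  exact_mod_cast (card_filter_le _ _).trans (by simp)

theorem visitSum_eq_visits_mul_mean (ha : ∀ τ ∈ Icc 1 t, a τ = 0 ∨ a τ = 1) :
    visitSum a x t = visits a t * mean a x t := by
  rcases visits_eq_zero_or_one_le ha with h0 | h1
  · have hzero := (sum_eq_zero_iff_of_nonneg (nonneg_of_eq_zero_or_eq_one ha)).1 h0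
    have hS : visitSum a x t = 0 := sum_eq_zero fun τ hτ => by rw [hzero τ hτ, zero_mul]
    rw [hS, h0, zero_mul]
  · rw [mean, max_eq_right h1, mul_div_cancel₀ _ (by linarith)]

theorem mean_mem_Icc (ha : ∀ τ ∈ Icc 1 t, 0 ≤ a τ) (hx : ∀ τ ∈ Icc 1 t, x τ ∈ Set.Icc 0 1) :
    mean a x t ∈ Set.Icc 0 1 := by
  have hpos : 0 < max 1 (visits a t) := lt_max_of_lt_left one_pos
  have hS0 : 0 ≤ visitSum a x t := sum_nonneg fun τ hτ => mul_nonneg (ha τ hτ) (hx τ hτ).1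
  have hSn : visitSum a x t ≤ visits a t :=
    sum_le_sum fun τ hτ => mul_le_of_le_one_right (ha τ hτ) (hx τ hτ).2
  exact ⟨div_nonneg hS0 hpos.le, (div_le_one hpos).2 (hSn.trans (le_max_right _ _))⟩

theorem leaderLoss_le (ha : ∀ τ ∈ Icc 1 t, a τ = 0 ∨ a τ = 1) (c : ℝ) :
    leaderLoss a x t ≤ ∑ τ ∈ Icc 1 t, a τ * (x τ - c) ^ 2 := by
  rw [sum_mul_sub_sq_eq_of_sum_mul_eq _ _ _ (visitSum_eq_visits_mul_mean ha) c]
  exact le_add_of_nonneg_right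
    (mul_nonneg (visits_nonneg (nonneg_of_eq_zero_or_eq_one ha)) (sq_nonneg _))

theorem sq_sub_mean_eq_leaderLoss_succ_sub (ha : ∀ τ ∈ Icc 1 (t + 1), a τ = 0 ∨ a τ = 1) :
    a (t + 1) * (x (t + 1) - mean a x t) ^ 2 =
      leaderLoss a x (t + 1) - leaderLoss a x t +
        a (t + 1) * (x (t + 1) - mean a x t) ^ 2 / max 1 (visits a (t + 1)) := by
  have ha' : ∀ τ ∈ Icc 1 t, a τ = 0 ∨ a τ = 1 :=
    fun τ hτ => ha τ (Icc_subset_Icc_right t.le_succ hτ)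
  rcases ha (t + 1) (right_mem_Icc.2 (Nat.le_add_left 1 t)) with h | h
  · have hmean : mean a x (t + 1) = mean a x t := by
      rw [mean, mean, visits_succ, visitSum_succ, h, zero_mul, add_zero, add_zero]
    rw [leaderLoss, sum_Icc_succ_top (Nat.le_add_left 1 t), hmean, h, leaderLoss]
    ring
  · have hk : 0 ≤ visits a t := visits_nonneg (nonneg_of_eq_zero_or_eq_one ha')
    have hS : visitSum a x t = visits a t * mean a x t := visitSum_eq_visits_mul_mean ha'
    have hn : visits a (t + 1) = visits a t + 1 := by rw [visits_succ, h]
    have hmean : mean a x (t + 1) = (visits a t * mean a x t + x (t + 1)) / (visits a t + 1) := by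
      rw [mean, hn, visitSum_succ, h, one_mul, max_eq_right (by linarith), hS]
    have hloss : leaderLoss a x (t + 1) = leaderLoss a x t +
        visits a t * (mean a x (t + 1) - mean a x t) ^ 2 +
        a (t + 1) * (x (t + 1) - mean a x (t + 1)) ^ 2 := by
      rw [leaderLoss, sum_Icc_succ_top (Nat.le_add_left 1 t),
        sum_mul_sub_sq_eq_of_sum_mul_eq (Icc 1 t) a x hS]
      rfl
    rw [hloss, hn, max_eq_right (by linarith), hmean, h]
    field_simp
    ring

theorem sum_sq_sub_mean_eq (ha : ∀ τ ∈ Icc 1 T, a τ = 0 ∨ a τ = 1) :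
    ∑ t ∈ Icc 1 T, a t * (x t - mean a x (t - 1)) ^ 2 =
      leaderLoss a x T + ∑ t ∈ Icc 1 T, a t * (x t - mean a x (t - 1)) ^ 2 / max 1 (visits a t) := by
  induction T with
  | zero => simp [leaderLoss]
  | succ T ih =>
    rw [sum_Icc_succ_top (Nat.le_add_left 1 T), sum_Icc_succ_top (Nat.le_add_left 1 T),
      ih fun τ hτ => ha τ (Icc_subset_Icc_right T.le_succ hτ), Nat.add_sub_cancel]
    linarith [sq_sub_mean_eq_leaderLoss_succ_sub (x := x) ha]

theorem sum_div_max_one_visits_le (ha : ∀ τ ∈ Icc 1 T, a τ = 0 ∨ a τ = 1) :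
    ∑ t ∈ Icc 1 T, a t / max 1 (visits a t) ≤
      Real.log (max 1 (visits a T)) + min 1 (visits a T) := by
  induction T with
  | zero => simp [visits]
  | succ T ih =>
    have ha' : ∀ τ ∈ Icc 1 T, a τ = 0 ∨ a τ = 1 :=
      fun τ hτ => ha τ (Icc_subset_Icc_right T.le_succ hτ)
    specialize ih ha'
    rw [sum_Icc_succ_top (Nat.le_add_left 1 T), visits_succ]
    rcases ha (T + 1) (right_mem_Icc.2 (Nat.le_add_left 1 T)) with h | h
    · simpa [h] using ih
    rw [h]
    rcases visits_eq_zero_or_one_le ha' with h0 | h1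
    · rw [h0] at ih ⊢
      norm_num at ih ⊢
      linarith
    · have hk : 0 < visits a T := by linarith
      rw [max_eq_right h1, min_eq_left h1] at ih
      rw [max_eq_right (by linarith), min_eq_left (by linarith), one_div]
      linarith [Real.inv_add_one_le_log_add_one_sub_log hk]

theorem log_max_one_visits_le (ha : ∀ τ ∈ Icc 1 T, a τ = 0 ∨ a τ = 1) :
    Real.log (max 1 (visits a T)) ≤ Real.log T := by
  rcases le_total (visits a T) 1 with h | h
  · rw [max_eq_left h, Real.log_one]
    exact Real.log_natCast_nonneg T
  · rw [max_eq_right h]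
    exact Real.log_le_log (by linarith) (visits_le ha)

theorem sum_sq_sub_mean_le (ha : ∀ τ ∈ Icc 1 T, a τ = 0 ∨ a τ = 1)
    (hx : ∀ τ ∈ Icc 1 T, x τ ∈ Set.Icc 0 1) (c : ℝ) :
    ∑ t ∈ Icc 1 T, a t * (x t - mean a x (t - 1)) ^ 2 ≤
      ∑ t ∈ Icc 1 T, a t * (x t - c) ^ 2 + Real.log T + 1 := by
  have ha₀ := nonneg_of_eq_zero_or_eq_one ha
  have hterm : ∀ t ∈ Icc 1 T, a t * (x t - mean a x (t - 1)) ^ 2 / max 1 (visits a t) ≤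
      a t / max 1 (visits a t) := fun t ht => by
    have hsub : Icc 1 (t - 1) ⊆ Icc 1 T := Icc_subset_Icc_right ((Nat.sub_le t 1).trans (mem_Icc.1 ht).2)
    have hμ := mean_mem_Icc (fun τ hτ => ha₀ τ (hsub hτ)) (fun τ hτ => hx τ (hsub hτ))
    have hsq : (x t - mean a x (t - 1)) ^ 2 ≤ 1 :=
      sq_le_one_iff_abs_le_one _ |>.2 <|
        abs_sub_le_of_nonneg_of_le (hx t ht).1 (hx t ht).2 hμ.1 hμ.2
    exact div_le_div_of_nonneg_right (mul_le_of_le_one_right (ha₀ t ht) hsq)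
      (lt_max_of_lt_left one_pos).le
  calc ∑ t ∈ Icc 1 T, a t * (x t - mean a x (t - 1)) ^ 2
      = leaderLoss a x T + ∑ t ∈ Icc 1 T, a t * (x t - mean a x (t - 1)) ^ 2 / max 1 (visits a t) :=
        sum_sq_sub_mean_eq ha
    _ ≤ ∑ t ∈ Icc 1 T, a t * (x t - c) ^ 2 + ∑ t ∈ Icc 1 T, a t / max 1 (visits a t) :=
        add_le_add (leaderLoss_le ha c) (sum_le_sum hterm)
    _ ≤ ∑ t ∈ Icc 1 T, a t * (x t - c) ^ 2 + Real.log T + 1 := by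
        linarith [sum_div_max_one_visits_le ha, log_max_one_visits_le ha,
          min_le_left 1 (visits a T)]

end EmpiricalMean

open EmpiricalMean in
theorem empirical_mean_predictor_general
    {ι : Type*} [Fintype ι] (T : ℕ)
    (ℓ : ℕ → ι → ℝ) (I : ℕ → ι → ℝ)
    (hℓ : ∀ t ∈ Finset.Icc 1 T, ∀ i, ℓ t i ∈ Set.Icc (0 : ℝ) 1)
    (hI : ∀ t ∈ Finset.Icc 1 T, ∀ i, I t i = 0 ∨ I t i = 1)
    (N : ℕ → ι → ℝ) (hN : ∀ t, ∀ i, N t i = ∑ τ ∈ Finset.Icc 1 t, I τ i)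
    (m : ℕ → ι → ℝ)
    (hm : ∀ t ∈ Finset.Icc 1 T, ∀ i,
      m t i = (∑ τ ∈ Finset.Icc 1 (t - 1), I τ i * ℓ τ i) / max 1 (N (t - 1) i))
    (mstar : ι → ℝ) :
    ∑ t ∈ Finset.Icc 1 T, ∑ i, I t i * (ℓ t i - m t i) ^ 2 ≤
      ∑ t ∈ Finset.Icc 1 T, ∑ i, I t i * (ℓ t i - mstar i) ^ 2
        + (Fintype.card ι : ℝ) * Real.log T + (Fintype.card ι : ℝ) := by
  have hcoord (i : ι) : ∑ t ∈ Icc 1 T, I t i * (ℓ t i - m t i) ^ 2 ≤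
      ∑ t ∈ Icc 1 T, I t i * (ℓ t i - mstar i) ^ 2 + Real.log T + 1 := by
    have hmean : ∀ t ∈ Icc 1 T, m t i = mean (I · i) (ℓ · i) (t - 1) := fun t ht => by
      rw [hm t ht i, hN]
      rfl
    rw [sum_congr rfl fun t ht => by rw [hmean t ht]]
    exact sum_sq_sub_mean_le (fun t ht => hI t ht i) (fun t ht => hℓ t ht i) (mstar i)
  rw [sum_comm, sum_comm (s := Icc 1 T)]
  refine (sum_le_sum fun i _ => hcoord i).trans_eq ?_
  simp [sum_add_distrib]

/-- Empirical-mean predictor bound with visitation indicators: with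
`N t i = ∑_{τ=1}^{t} I τ i` and
`m t i = (∑_{τ=1}^{t-1} I τ i · ℓ τ i) / max 1 (N (t-1) i)`, the squared prediction
error on visited coordinates is within `|ι|·ln T + |ι|` of that of any fixed
predictor `mstar : ι → [0,1]`. -/
theorem empirical_mean_predictor
    {ι : Type*} [Fintype ι] (T : ℕ) (hT : 1 ≤ T)
    (ℓ : ℕ → ι → ℝ) (I : ℕ → ι → ℝ)
    (hℓ : ∀ t ∈ Finset.Icc 1 T, ∀ i, ℓ t i ∈ Set.Icc (0 : ℝ) 1)
    (hI : ∀ t ∈ Finset.Icc 1 T, ∀ i, I t i = 0 ∨ I t i = 1)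
    (N : ℕ → ι → ℝ) (hN : ∀ t, ∀ i, N t i = ∑ τ ∈ Finset.Icc 1 t, I τ i)
    (m : ℕ → ι → ℝ)
    (hm : ∀ t ∈ Finset.Icc 1 T, ∀ i,
      m t i = (∑ τ ∈ Finset.Icc 1 (t - 1), I τ i * ℓ τ i) / max 1 (N (t - 1) i))
    (mstar : ι → ℝ) (hstar : ∀ i, mstar i ∈ Set.Icc (0 : ℝ) 1) :
    ∑ t ∈ Finset.Icc 1 T, ∑ i, I t i * (ℓ t i - m t i) ^ 2 ≤
      ∑ t ∈ Finset.Icc 1 T, ∑ i, I t i * (ℓ t i - mstar i) ^ 2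
        + (Fintype.card ι : ℝ) * Real.log T + (Fintype.card ι : ℝ) :=
  empirical_mean_predictor_general T ℓ I hℓ hI N hN m hm mstar
end

section
/- Let ι be a finite type, let c > 0, C ≥ 0, J ≥ 0, and R be real numbers, and let G, Δ, Q : ι → ℝ satisfy G(i) ≥ 0, Δ(i) > 0, and Q(i) ≥ 0 for all i ∈ ι. Set U = Σ_{i∈ι} G(i)²/Δ(i). Assume that R ≤ c·( Σ_{i∈ι} G(i)·√(Q(i)) + J ) and that R ≥ Σ_{i∈ι} Q(i)·Δ(i) − 2C. Then: R ≤ 12·c²·U + 6·c·√(U·C) + 2·c·J. -/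
/-- Self-bounding argument for gap-dependent best-of-both-worlds bounds: if the regret
`R` satisfies `R ≤ c·(∑ i, G i · √(Q i) + J)` and the self-bounding constraint
`R ≥ ∑ i, Q i · Δ i - 2·C`, then with `U = ∑ i, G i² / Δ i` one has
`R ≤ 12·c²·U + 6·c·√(U·C) + 2·c·J`. -/
theorem self_bounding_regret
    {ι : Type*} [Fintype ι]
    (c C J R : ℝ) (hc : 0 < c) (hC : 0 ≤ C) (hJ : 0 ≤ J)
    (G Δ Q : ι → ℝ)
    (hG : ∀ i, 0 ≤ G i) (hΔ : ∀ i, 0 < Δ i) (hQ : ∀ i, 0 ≤ Q i)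
    (U : ℝ) (hU : U = ∑ i, G i ^ 2 / Δ i)
    (h1 : R ≤ c * (∑ i, G i * Real.sqrt (Q i) + J))
    (h2 : R ≥ ∑ i, Q i * Δ i - 2 * C) :
    R ≤ 12 * c ^ 2 * U + 6 * c * Real.sqrt (U * C) + 2 * c * J := by
  have hU0 : 0 ≤ U := by
    rw [hU]
    exact Finset.sum_nonneg fun i _ => div_nonneg (sq_nonneg _) (hΔ i).le
  have hsqrtUC : 0 ≤ Real.sqrt (U * C) := Real.sqrt_nonneg _
  rcases le_or_gt R 0 with hR | hR
  · nlinarith [sq_nonneg c, mul_nonneg (sq_nonneg c) hU0, mul_nonneg hc.le hJ,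
      mul_nonneg hc.le hsqrtUC]
  -- key self-bounding step, valid for any 0 < l ≤ 1/c
  have key : ∀ l : ℝ, 0 < l → c * l ≤ 1 → R ≤ c * U / l + 2 * c * l * C + 2 * c * J := by
    intro l hl hcl1
    have hsum : ∑ i, G i * Real.sqrt (Q i)
        ≤ U / (2 * l) + l / 2 * ∑ i, Q i * Δ i := by
      rw [hU, Finset.sum_div, Finset.mul_sum, ← Finset.sum_add_distrib]
      apply Finset.sum_le_sum
      intro i _
      have hd := hΔ i
      have hs : Real.sqrt (Q i) ^ 2 = Q i := Real.sq_sqrt (hQ i)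
      have key2 : G i * Real.sqrt (Q i) * (2 * l * Δ i)
          ≤ G i ^ 2 + l ^ 2 * Δ i ^ 2 * Q i := by
        nlinarith [sq_nonneg (G i - l * Δ i * Real.sqrt (Q i)), hs,
          sq_nonneg (l * Δ i)]
      have hpos : (0:ℝ) < 2 * l * Δ i := by positivity
      have := (le_div_iff₀ hpos).mpr key2
      have heq : (G i ^ 2 + l ^ 2 * Δ i ^ 2 * Q i) / (2 * l * Δ i)
          = G i ^ 2 / Δ i / (2 * l) + l / 2 * (Q i * Δ i) := by
        field_simp
      linarith [heq ▸ this]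
    have hS : ∑ i, Q i * Δ i ≤ R + 2 * C := by linarith
    have h3' : ∑ i, G i * Real.sqrt (Q i)
        ≤ U / (2 * l) + l / 2 * (R + 2 * C) := by
      nlinarith [mul_le_mul_of_nonneg_left hS (by positivity : (0:ℝ) ≤ l / 2)]
    have h4 : R ≤ c * (U / (2 * l)) + c * l / 2 * R + c * l * C + c * J := by
      have := mul_le_mul_of_nonneg_left h3' hc.le
      nlinarith [h1]
    have hX : c * U / l = 2 * (c * (U / (2 * l))) := by
      field_simp
    nlinarith [h4, hX, mul_nonneg (sub_nonneg.mpr hcl1) hR.le]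
  rcases eq_or_lt_of_le hU0 with hU0' | hUpos
  · -- U = 0, hence every G i = 0
    have hGz : ∀ i, G i = 0 := by
      intro i
      have h := (Finset.sum_eq_zero_iff_of_nonneg
        (fun j _ => div_nonneg (sq_nonneg (G j)) (hΔ j).le)).mp (hU ▸ hU0'.symm) i
        (Finset.mem_univ i)
      have hz : G i ^ 2 = 0 :=
        (div_eq_zero_iff.mp h).resolve_right (hΔ i).ne'
      exact pow_eq_zero_iff (n := 2) (by norm_num) |>.mp hz
    have hT : ∑ i, G i * Real.sqrt (Q i) = 0 :=
      Finset.sum_eq_zero fun i _ => by rw [hGz i, zero_mul]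
    rw [hT] at h1
    nlinarith [mul_nonneg hc.le hJ, mul_nonneg hc.le hsqrtUC,
      mul_nonneg (sq_nonneg c) hU0]
  · set sU := Real.sqrt U with hsU
    set sC := Real.sqrt C with hsC
    have hsU2 : sU ^ 2 = U := Real.sq_sqrt hU0
    have hsC2 : sC ^ 2 = C := Real.sq_sqrt hC
    have hsUpos : 0 < sU := Real.sqrt_pos.mpr hUpos
    have hsCn : 0 ≤ sC := Real.sqrt_nonneg _
    have hUC : Real.sqrt (U * C) = sU * sC := Real.sqrt_mul hU0 C
    have hden : 0 < c * sU + sC := by positivity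
    set l := sU / (c * sU + sC) with hl_def
    have hl : 0 < l := div_pos hsUpos hden
    have hl_eq : l * (c * sU + sC) = sU := div_mul_cancel₀ _ hden.ne'
    have hcl1 : c * l ≤ 1 := by
      have hcl' : c * l = c * sU / (c * sU + sC) := by rw [hl_def]; ring
      rw [hcl', div_le_one hden]
      linarith
    have hkey := key l hl hcl1
    have hA : c * U / l = c ^ 2 * U + c * (sU * sC) := by
      rw [div_eq_iff hl.ne']
      linear_combination (c ^ 2 * l - c) * hsU2 + (-(c * sU)) * hl_eq
    have hBeq : l * C = sU * sC - c * l * sU * sC := by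
      linear_combination sC * hl_eq - l * hsC2
    have hB : l * C ≤ sU * sC := by
      have : 0 ≤ c * l * sU * sC := by positivity
      linarith
    have hB2 : 2 * c * (l * C) ≤ 2 * c * (sU * sC) :=
      mul_le_mul_of_nonneg_left hB (by positivity)
    rw [hUC]
    have h11 : 0 ≤ c ^ 2 * U := by positivity
    have h12 : 0 ≤ c * (sU * sC) := by positivity
    linarith [hkey, hA]
end

section
/- Consider a finite layered episodic MDP with horizon H ≥ 1, and let π and π' be two policies on it and ℓ a loss function. Then: Σ_{s} Σ_{a} q^{π'}(s,a) · ( Q^{π}(s,a;ℓ) − V^{π}(s;ℓ) − ℓ(s,a) ) = − V^{π}(s_0;ℓ), where the sum ranges over all non-terminal states s and all actions a. In particular, the left-hand side depends only on π and ℓ and not on π'. -/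
/-- Loss-shifting invariance in a finite layered episodic MDP with horizon `H`:
states carry a layer index `layer s < H`, each layer is nonempty, the initial layer
consists of the single state `s0`, transitions `P` are supported on the next layer and
are probability distributions there, `π` and `π'` are policies, `Q`/`V` are the value
functions of `π` for the loss `ℓ` (defined by backward recursion), and `q'` is the
occupancy measure of `π'` (defined by forward recursion, with
`q^{π'}(s,a) = q'(s)·π'(a|s)`). Then
`∑_{s,a} q^{π'}(s,a) · (Q^π(s,a;ℓ) - V^π(s;ℓ) - ℓ(s,a)) = -V^π(s0;ℓ)`,
which in particular does not depend on `π'`. -/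
theorem loss_shifting_invariant
    {𝒮 A : Type*} [Fintype 𝒮] [Fintype A] [Nonempty A]
    (H : ℕ) (hH : 1 ≤ H)
    (layer : 𝒮 → ℕ) (hlayer : ∀ s, layer s < H)
    (hlayer_nonempty : ∀ h < H, ∃ s, layer s = h)
    (s0 : 𝒮) (hs0 : layer s0 = 0)
    (hs0_unique : ∀ s, layer s = 0 → s = s0)
    (P : 𝒮 → A → 𝒮 → ℝ)
    (hPnonneg : ∀ s a s', 0 ≤ P s a s')
    (hPsupp : ∀ s a s', layer s' ≠ layer s + 1 → P s a s' = 0)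
    (hPsum : ∀ s a, layer s + 1 < H → ∑ s', P s a s' = 1)
    (π π' : 𝒮 → A → ℝ)
    (hπnonneg : ∀ s a, 0 ≤ π s a) (hπsum : ∀ s, ∑ a, π s a = 1)
    (hπ'nonneg : ∀ s a, 0 ≤ π' s a) (hπ'sum : ∀ s, ∑ a, π' s a = 1)
    (ℓ : 𝒮 → A → ℝ)
    (Q : 𝒮 → A → ℝ) (V : 𝒮 → ℝ)
    (hV : ∀ s, V s = ∑ a, π s a * Q s a)
    (hQlast : ∀ s a, layer s + 1 = H → Q s a = ℓ s a)
    (hQrec : ∀ s a, layer s + 1 < H → Q s a = ℓ s a + ∑ s', P s a s' * V s')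
    (q' : 𝒮 → ℝ)
    (hq0 : q' s0 = 1)
    (hqrec : ∀ s', 0 < layer s' → q' s' = ∑ s, ∑ a, q' s * π' s a * P s a s') :
    ∑ s, ∑ a, (q' s * π' s a) * (Q s a - V s - ℓ s a) = -V s0 := by
  classical
  have hQV : ∀ s a, Q s a - ℓ s a = ∑ s', P s a s' * V s' := by
    intro s a
    rcases lt_or_eq_of_le (Nat.succ_le_of_lt (hlayer s)) with h | h
    · rw [hQrec s a h]; ring
    · have hz : ∀ s', P s a s' = 0 := fun s' =>
        hPsupp s a s' (by have := hlayer s'; omega)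
      rw [hQlast s a h]
      simp [hz]
  have hfeq : ∀ s', (∑ s, ∑ a, q' s * π' s a * P s a s') * V s'
      = q' s' * V s' - (if s' = s0 then V s0 else 0) := by
    intro s'
    by_cases h0 : layer s' = 0
    · have hes : s' = s0 := hs0_unique s' h0
      subst hes
      have hz : (∑ s, ∑ a, q' s * π' s a * P s a s') = 0 := by
        apply Finset.sum_eq_zero; intro s _
        apply Finset.sum_eq_zero; intro a _
        rw [hPsupp s a s' (by omega)]; ring
      simp [hz, hq0]
    · have hne : s' ≠ s0 := fun h => h0 (by rw [h, hs0])
      rw [← hqrec s' (Nat.pos_of_ne_zero h0)]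
      simp [hne]
  have step1 : ∑ s, ∑ a, (q' s * π' s a) * (Q s a - V s - ℓ s a)
      = (∑ s', (∑ s, ∑ a, q' s * π' s a * P s a s') * V s') - ∑ s, q' s * V s := by
    have expand : ∀ s a, (q' s * π' s a) * (Q s a - V s - ℓ s a)
        = (∑ s', q' s * π' s a * P s a s' * V s') - q' s * π' s a * V s := by
      intro s a
      have : (q' s * π' s a) * (Q s a - V s - ℓ s a)
          = (q' s * π' s a) * (Q s a - ℓ s a) - q' s * π' s a * V s := by ring
      rw [this, hQV s a, Finset.mul_sum]
      congr 1
      apply Finset.sum_congr rfl; intro s' _; ring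
    calc ∑ s, ∑ a, (q' s * π' s a) * (Q s a - V s - ℓ s a)
        = ∑ s, ∑ a, ((∑ s', q' s * π' s a * P s a s' * V s') - q' s * π' s a * V s) := by
          refine Finset.sum_congr rfl fun s _ => Finset.sum_congr rfl fun a _ => expand s a
      _ = (∑ s, ∑ a, ∑ s', q' s * π' s a * P s a s' * V s') - ∑ s, ∑ a, q' s * π' s a * V s := by
          rw [← Finset.sum_sub_distrib]
          refine Finset.sum_congr rfl fun s _ => ?_
          rw [← Finset.sum_sub_distrib]
      _ = (∑ s', (∑ s, ∑ a, q' s * π' s a * P s a s') * V s') - ∑ s, q' s * V s := by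
          congr 1
          · have hexp : ∀ s', (∑ s, ∑ a, q' s * π' s a * P s a s') * V s'
                = ∑ s, ∑ a, q' s * π' s a * P s a s' * V s' := by
              intro s'
              rw [Finset.sum_mul]
              exact Finset.sum_congr rfl fun s _ => by rw [Finset.sum_mul]
            rw [Finset.sum_congr rfl fun s' _ => hexp s']
            calc ∑ s, ∑ a, ∑ s', q' s * π' s a * P s a s' * V s'
                = ∑ s, ∑ s', ∑ a, q' s * π' s a * P s a s' * V s' :=
                  Finset.sum_congr rfl fun s _ => Finset.sum_comm
              _ = ∑ s', ∑ s, ∑ a, q' s * π' s a * P s a s' * V s' := Finset.sum_comm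
          · refine Finset.sum_congr rfl fun s _ => ?_
            rw [← Finset.sum_mul, ← Finset.mul_sum, hπ'sum, mul_one]
  rw [step1]
  have : ∑ s', (∑ s, ∑ a, q' s * π' s a * P s a s') * V s'
      = (∑ s', q' s' * V s') - V s0 := by
    rw [Finset.sum_congr rfl fun s' _ => hfeq s', Finset.sum_sub_distrib]
    simp
  rw [this]
  ring
end
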